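/- arXiv:2205.08063 — 8 statements merged into one kernel-verified Lean document; each statement's English description precedes it below -/
import Mathlib

section
/- Let n ≥ 1, τ > 0, and let A, B, H(λ,K) be as in the context. For every row vector K = [K_1,…,K_n] ∈ ℝ^{1×n}, every λ ∈ ℝ, and every complex number z, the characteristic polynomial of H(λ,K) satisfies det(zI_n − H(λ,K)) = (z − 1)^n + λ · Σ_{p=1}^{n} τ^p K_{n−p+1} (z − 1)^{n−p}. -/
open Matrix

/-- The n×n system matrix `A`: ones on the diagonal, `τ` on the superdiagonal. -/
noncomputable def Amat (n : ℕ) (τ : ℝ) : Matrix (Fin n) (Fin n) ℝ :=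
  Matrix.of fun i j => if (j : ℕ) = (i : ℕ) then 1 else if (j : ℕ) = (i : ℕ) + 1 then τ else 0

/-- The n×1 input matrix `B`: last entry `τ`, all other entries `0`. -/
noncomputable def Bmat (n : ℕ) (τ : ℝ) : Matrix (Fin n) (Fin 1) ℝ :=
  Matrix.of fun i _ => if (i : ℕ) = n - 1 then τ else 0

/-- `H(λ, K) = A - λ B K`. -/
noncomputable def Hmat (n : ℕ) (τ : ℝ) (lam : ℝ) (K : Matrix (Fin 1) (Fin n) ℝ) :
    Matrix (Fin n) (Fin n) ℝ :=
  Amat n τ - lam • (Bmat n τ * K)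

/-! With `x = z - 1`, the matrix `z • 1 - H(λ, K)` is `x • 1 - τ N + e_last (λ τ K)` where `N` is
the upper shift. For such a matrix `M_n(c)` (last row perturbed by `c`), expanding along the
first column gives `det M_{n+1}(c) = x det M_n(tail c) + c₀ τⁿ`, because the minor of the
bottom-left entry is lower triangular with diagonal `-τ`. Unrolling the recursion yields the
formula. -/

section

variable {R : Type*} [CommRing R]

def bidiagLastRow (x t : R) {n : ℕ} (c : Fin n → R) : Matrix (Fin n) (Fin n) R :=
  of fun i j => (if (j : ℕ) = i then x else 0) + (if (j : ℕ) = i + 1 then -t else 0) +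
    (if (i : ℕ) = n - 1 then c j else 0)

lemma bidiagLastRow_submatrix_succ_succ (x t : R) {n : ℕ} (c : Fin (n + 1) → R) :
    (bidiagLastRow x t c).submatrix Fin.succ Fin.succ = bidiagLastRow x t (Fin.tail c) := by
  ext i j
  have hlast : (i : ℕ) + 1 = n ↔ (i : ℕ) = n - 1 := by omega
  simp [bidiagLastRow, Fin.tail, hlast]

lemma det_bidiagLastRow_submatrix_castSucc_succ (x t : R) {n : ℕ} (c : Fin (n + 1) → R) :
    ((bidiagLastRow x t c).submatrix Fin.castSucc Fin.succ).det = (-t) ^ n := by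
  have hlt : ∀ i : Fin n, (i : ℕ) ≠ n := fun i => i.isLt.ne
  rw [det_of_isLowerTriangular]
  · simp [bidiagLastRow, hlt]
  · intro i j hij
    have hij : (i : ℕ) < j := hij
    have h₁ : (j : ℕ) + 1 ≠ i := by omega
    have h₂ : (j : ℕ) ≠ i := by omega
    simp [bidiagLastRow, hlt, h₁, h₂]

lemma det_bidiagLastRow_succ (x t : R) {n : ℕ} (c : Fin (n + 1) → R) :
    (bidiagLastRow x t c).det = x * (bidiagLastRow x t (Fin.tail c)).det + c 0 * t ^ n := by
  cases n with
  | zero => simp [bidiagLastRow, det_unique]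
  | succ m =>
    have hinner : ∀ i : Fin m, bidiagLastRow x t c i.castSucc.succ 0 = 0 := fun i => by
      simp [bidiagLastRow, i.isLt.ne]
    have hcorner : bidiagLastRow x t c 0 0 = x := by simp [bidiagLastRow]
    have hlast : bidiagLastRow x t c (Fin.last (m + 1)) 0 = c 0 := by simp [bidiagLastRow]
    rw [det_succ_column_zero, Fin.sum_univ_succ, Fin.sum_univ_castSucc, Fin.succAbove_zero,
      bidiagLastRow_submatrix_succ_succ, Fin.succ_last, Fin.succAbove_last,
      det_bidiagLastRow_submatrix_castSucc_succ]
    simp only [hinner, hcorner, hlast, mul_zero, zero_mul, Finset.sum_const_zero, zero_add,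
      Fin.val_zero, pow_zero, one_mul, Fin.val_last, Nat.succ_eq_add_one]
    have hsign : (-1 : R) ^ (m + 1) * (-t) ^ (m + 1) = t ^ (m + 1) := by
      rw [← mul_pow, neg_one_mul, neg_neg]
    linear_combination c 0 * hsign

lemma det_bidiagLastRow (x t : R) {n : ℕ} (c : Fin n → R) :
    (bidiagLastRow x t c).det = x ^ n + ∑ j, c j * t ^ (n - 1 - j) * x ^ (j : ℕ) := by
  induction n with
  | zero => simp [bidiagLastRow]
  | succ n ih =>
    have hterm : ∀ j : Fin n, x * (Fin.tail c j * t ^ (n - 1 - j) * x ^ (j : ℕ)) =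
        c j.succ * t ^ (n + 1 - 1 - j.succ) * x ^ (j.succ : ℕ) := fun j => by
      rw [Fin.val_succ, pow_succ, show n + 1 - 1 - (j + 1 : ℕ) = n - 1 - j by omega, Fin.tail]
      ring
    rw [det_bidiagLastRow_succ, ih, Fin.sum_univ_succ, mul_add, Finset.mul_sum,
      Finset.sum_congr rfl fun j _ => hterm j]
    simp only [Fin.val_zero, Nat.add_sub_cancel, Nat.sub_zero, pow_zero, mul_one, pow_succ]
    ring

end

lemma smul_one_sub_map_Hmat (n : ℕ) (τ lam : ℝ) (K : Matrix (Fin 1) (Fin n) ℝ) (z : ℂ) :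
    z • (1 : Matrix (Fin n) (Fin n) ℂ) - (Hmat n τ lam K).map (Complex.ofReal ·) =
      bidiagLastRow (z - 1) (τ : ℂ) fun j => (lam * τ * K 0 j : ℝ) := by
  ext i j
  simp only [Hmat, Amat, Bmat, bidiagLastRow, Matrix.sub_apply, Matrix.smul_apply, one_apply,
    map_apply, of_apply, mul_apply, Fin.sum_univ_one, smul_eq_mul, Fin.ext_iff]
  split_ifs <;> push_cast <;> first | omega | ring

/-- `det(zI − H(λ,K)) = (z−1)^n + λ ∑_{p=1}^n τ^p K_{n−p+1} (z−1)^{n−p}`.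
(The sum is reindexed by `p' = p - 1 : Fin n`; the 1-based gain `K_{n-p+1}` is the
0-based entry `K 0 ⟨n-1-p'⟩`.) -/
theorem stmt_0 (n : ℕ) (τ : ℝ)
    (K : Matrix (Fin 1) (Fin n) ℝ) (lam : ℝ) (z : ℂ) :
    (z • (1 : Matrix (Fin n) (Fin n) ℂ) - (Hmat n τ lam K).map (Complex.ofReal ·)).det
      = (z - 1) ^ n + (lam : ℂ) *
          ∑ p : Fin n, (τ : ℂ) ^ ((p : ℕ) + 1) *
            ((K 0 ⟨n - 1 - (p : ℕ), by have := p.isLt; omega⟩ : ℝ) : ℂ) *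
            (z - 1) ^ (n - 1 - (p : ℕ)) := by
  rw [smul_one_sub_map_Hmat, det_bidiagLastRow, ← Equiv.sum_comp Fin.revPerm, Finset.mul_sum]
  congr 1
  refine Finset.sum_congr rfl fun p _ => ?_
  have hrev : Fin.revPerm p = ⟨n - 1 - p, by omega⟩ := Fin.ext (by simp only [Fin.revPerm_apply, Fin.val_rev]; omega)
  rw [hrev, show n - 1 - (n - 1 - (p : ℕ)) = p by omega]
  push_cast
  ring
end

section
/- Let n ≥ 1, τ > 0, and let A, B, H(λ,K) be as in the context, and let G be a connected undirected graph with Laplacian L with eigenvalues 0 = λ_1 < λ_2 ≤ … ≤ λ_N as in the context. Consensus of the closed-loop system x(k+1) = (I_N ⊗ A − L ⊗ BK) x(k) is reached asymptotically (for every initial state) if and only if r(K) := max_{i=2,…,N} ρ(H(λ_i,K)) < 1, where ρ denotes the spectral radius. -/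
/-!
Write `L = V D Vᵀ` with `V` orthogonal. Each column `v_j` of `V` is an eigenvector of `L`, so the
closed-loop matrix maps `v_j ⊗ y` to `v_j ⊗ H(λ_j, K) y`, and expanding the initial state in this
basis gives `x_p(k) - x_q(k) = ∑_j (V p j - V q j) H(λ_j, K)^k y_j`. Since `L 𝟙 = 0` and `λ_j ≠ 0`
for `j ≠ 1`, these columns are orthogonal to `𝟙`, hence nonconstant, while `v_1` is constant. So
consensus means `H(λ_j, K)^k → 0` for all `j ≠ 1`, which by Gelfand's formula is `ρ(H(λ_j, K)) < 1`.
-/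

open Matrix Kronecker Filter

/-- Spectral radius of a real matrix: the largest modulus of its complex eigenvalues. -/
noncomputable def specRad {n : ℕ} (M : Matrix (Fin n) (Fin n) ℝ) : ℝ :=
  sSup ((fun z : ℂ => ‖z‖) '' spectrum ℂ (M.map (Complex.ofReal ·)))

open Topology

theorem Matrix.tendsto_nhds_iff {α ι κ R : Type*} [TopologicalSpace R] {l : Filter α}
    {f : α → Matrix ι κ R} {M : Matrix ι κ R} :
    Tendsto f l (𝓝 M) ↔ ∀ i j, Tendsto (fun a => f a i j) l (𝓝 (M i j)) :=
  tendsto_pi_nhds.trans <| forall_congr' fun _ => tendsto_pi_nhds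

theorem Matrix.tendsto_pow_mulVec_iff {ι R : Type*} [Fintype ι] [DecidableEq ι] [Semiring R]
    [TopologicalSpace R] [IsTopologicalSemiring R] (M : Matrix ι ι R) :
    (∀ x : ι → R, ∀ l, Tendsto (fun k => ((M ^ k) *ᵥ x) l) atTop (𝓝 0)) ↔
      Tendsto (M ^ ·) atTop (𝓝 0) := by
  rw [Matrix.tendsto_nhds_iff]
  refine ⟨fun h i j => by simpa [mulVec_single_one] using h (Pi.single j 1) i, fun h x l => ?_⟩
  simpa [mulVec, dotProduct] using tendsto_finsetSum _ fun j _ => (h l j).mul_const (x j)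

theorem Matrix.tendsto_pow_map_ofReal_iff {ι : Type*} [Fintype ι] [DecidableEq ι]
    (M : Matrix ι ι ℝ) :
    Tendsto (M.map (Complex.ofReal ·) ^ ·) atTop (𝓝 0) ↔ Tendsto (M ^ ·) atTop (𝓝 0) := by
  have hpow (k : ℕ) : M.map (Complex.ofReal ·) ^ k = (M ^ k).map (Complex.ofReal ·) :=
    (map_pow Complex.ofRealHom.mapMatrix M k).symm
  simp only [hpow, tendsto_nhds_iff, map_apply, zero_apply, ← Complex.ofReal_zero,
    tendsto_ofReal_iff]

section BanachAlgebra

variable {A : Type*} [NormedRing A] [NormedAlgebra ℂ A] [CompleteSpace A]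

theorem tendsto_pow_nhds_zero_of_spectralRadius_lt_one {a : A} (ha : spectralRadius ℂ a < 1) :
    Tendsto (a ^ ·) atTop (𝓝 0) := by
  obtain ⟨r, hρr, hr1⟩ := ENNReal.lt_iff_exists_nnreal_btwn.mp ha
  have hbound : ∀ᶠ k : ℕ in atTop, ‖a ^ k‖₊ ≤ r ^ k := by
    filter_upwards [(spectrum.gelfand_formula a).eventually_lt_const hρr,
      eventually_ne_atTop 0] with k hk hk0
    have := ENNReal.pow_le_pow_left (n := k) hk.le
    rw [← ENNReal.rpow_natCast, ← ENNReal.rpow_mul, one_div_mul_cancel (by exact_mod_cast hk0),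
      ENNReal.rpow_one] at this
    exact_mod_cast this
  rw [tendsto_zero_iff_norm_tendsto_zero]
  refine squeeze_zero' (.of_forall fun _ => norm_nonneg _) ?_
    (tendsto_pow_atTop_nhds_zero_of_lt_one r.coe_nonneg (by exact_mod_cast hr1))
  filter_upwards [hbound] with k hk
  exact_mod_cast hk

theorem tendsto_pow_nhds_zero_iff_forall_norm_lt_one (a : A) :
    Tendsto (a ^ ·) atTop (𝓝 0) ↔ ∀ μ ∈ spectrum ℂ a, ‖μ‖ < 1 := by
  refine ⟨fun h μ hμ => ?_, fun h => ?_⟩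
  · have hle (k : ℕ) : ‖μ‖ ^ k ≤ ‖a ^ k‖ * ‖(1 : A)‖ := by
      simpa using spectrum.norm_le_norm_mul_of_mem (spectrum.pow_mem_pow a k hμ)
    have hlim : Tendsto (fun k => ‖a ^ k‖ * ‖(1 : A)‖) atTop (𝓝 0) := by
      simpa using (tendsto_zero_iff_norm_tendsto_zero.mp h).mul_const ‖(1 : A)‖
    simpa using tendsto_pow_atTop_nhds_zero_iff.mp
      (squeeze_zero (fun _ => by positivity) hle hlim)
  · nontriviality A
    exact tendsto_pow_nhds_zero_of_spectralRadius_lt_one <| by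
      simpa using spectrum.spectralRadius_lt_of_forall_lt a (r := 1)
        fun z hz => by simpa [← NNReal.coe_lt_coe] using h z hz

end BanachAlgebra

theorem specRad_lt_one_iff {m : ℕ} (M : Matrix (Fin m) (Fin m) ℝ) :
    specRad M < 1 ↔ ∀ μ ∈ spectrum ℂ (M.map (Complex.ofReal ·)), ‖μ‖ < 1 := by
  rcases (spectrum ℂ (M.map (Complex.ofReal ·))).eq_empty_or_nonempty with hσ | hσ
  · simp [specRad, hσ] -- `sSup ∅ = 0`; this is the case `m = 0`
  · exact ((finite_spectrum _).image _).csSup_lt_iff (hσ.image _) |>.trans Set.forall_mem_image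

section LinftyOpNorm

-- Any algebra norm would do: it only serves to apply Gelfand's formula to complex matrices.
attribute [local instance] Matrix.linftyOpNormedRing Matrix.linftyOpNormedAlgebra

theorem tendsto_pow_mulVec_iff_specRad_lt_one {m : ℕ} (M : Matrix (Fin m) (Fin m) ℝ) :
    (∀ x : Fin m → ℝ, ∀ l, Tendsto (fun k => ((M ^ k) *ᵥ x) l) atTop (𝓝 0)) ↔
      specRad M < 1 :=
  M.tendsto_pow_mulVec_iff.trans <| M.tendsto_pow_map_ofReal_iff.symm.trans <|
    (tendsto_pow_nhds_zero_iff_forall_norm_lt_one _).trans (specRad_lt_one_iff M).symm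

end LinftyOpNorm

section ClosedLoop

variable {ι κ R : Type*} [Fintype ι] [CommRing R]

theorem Matrix.kronecker_mulVec_mul [Fintype κ] {P : Matrix ι ι R} {Q : Matrix κ κ R} (v : ι → R)
    (y : κ → R) :
    (P ⊗ₖ Q) *ᵥ (fun i => v i.1 * y i.2) = fun i => (P *ᵥ v) i.1 * (Q *ᵥ y) i.2 := by
  ext ⟨p, l⟩
  simp only [mulVec, dotProduct, kroneckerMap_apply, Fintype.sum_prod_type, Finset.sum_mul_sum]
  exact Finset.sum_congr rfl fun _ _ => Finset.sum_congr rfl fun _ _ => by ring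

variable [DecidableEq ι]

theorem closedLoop_pow_mulVec_of_eigenvector [Fintype κ] [DecidableEq κ] (A C : Matrix κ κ R)
    {L : Matrix ι ι R} {μ : R} {v : ι → R} (hv : L *ᵥ v = μ • v) (y : κ → R) (k : ℕ) :
    (1 ⊗ₖ A - L ⊗ₖ C) ^ k *ᵥ (fun i : ι × κ => v i.1 * y i.2) =
      fun i : ι × κ => v i.1 * ((A - μ • C) ^ k *ᵥ y) i.2 := by
  induction k with
  | zero => simp
  | succ k ih =>
    rw [pow_succ', ← mulVec_mulVec, ih, sub_mulVec, kronecker_mulVec_mul, kronecker_mulVec_mul,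
      hv, one_mulVec, pow_succ', ← mulVec_mulVec, sub_mulVec, smul_mulVec]
    ext i
    simp only [Pi.sub_apply, Pi.smul_apply, smul_eq_mul]
    ring

variable {V : Matrix ι ι R} {lam : ι → R}

theorem Matrix.mulVec_col_of_transpose_mul_self_eq_one (hV : Vᵀ * V = 1) (j : ι) :
    (V * diagonal lam * Vᵀ) *ᵥ V.col j = lam j • V.col j := by
  rw [← mulVec_single_one V j, mulVec_mulVec, Matrix.mul_assoc, Matrix.mul_assoc, hV,
    Matrix.mul_one, ← mulVec_mulVec, mulVec_single_one, ← mulVec_smul]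
  congr 1
  ext p
  by_cases h : j = p
  · subst h; simp [diagonal]
  · simp [diagonal, Ne.symm h]

theorem Matrix.eq_sum_kronecker_col_of_transpose_mul_self_eq_one (hV : Vᵀ * V = 1)
    (x : ι × κ → R) :
    x = ∑ j, fun i : ι × κ => V.col j i.1 * ∑ p, V p j * x (p, i.2) := by
  ext ⟨q, m⟩
  have hV' (p : ι) : ∑ j, V q j * V p j = if q = p then 1 else 0 := by
    simpa [mul_apply, one_apply] using
      congrFun (congrFun (mul_eq_one_comm.mp hV : V * Vᵀ = 1) q) p
  simp only [Finset.sum_apply, Finset.mul_sum, col_apply, ← mul_assoc]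
  rw [Finset.sum_comm]
  simp only [← Finset.sum_mul, hV', ite_mul, one_mul, zero_mul, Finset.sum_ite_eq, Finset.mem_univ,
    if_true]

theorem closedLoop_pow_mulVec [Fintype κ] [DecidableEq κ] (hV : Vᵀ * V = 1) (A C : Matrix κ κ R)
    (x : ι × κ → R) (k : ℕ) :
    (1 ⊗ₖ A - (V * diagonal lam * Vᵀ) ⊗ₖ C) ^ k *ᵥ x =
      ∑ j, fun i : ι × κ =>
        V.col j i.1 * ((A - lam j • C) ^ k *ᵥ fun m => ∑ p, V p j * x (p, m)) i.2 := by
  conv_lhs => rw [eq_sum_kronecker_col_of_transpose_mul_self_eq_one hV x, mulVec_sum]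
  exact Finset.sum_congr rfl fun j _ => closedLoop_pow_mulVec_of_eigenvector A C
    (mulVec_col_of_transpose_mul_self_eq_one hV j) (fun m => ∑ p, V p j * x (p, m)) k

theorem Matrix.sum_col_eq_zero_of_mulVec_const_eq_zero [NoZeroDivisors R] (hV : Vᵀ * V = 1)
    (hL1 : (V * diagonal lam * Vᵀ) *ᵥ (fun _ => 1) = 0) {j : ι} (hj : lam j ≠ 0) :
    ∑ p, V p j = 0 := by
  have := congrArg (fun w => (Vᵀ *ᵥ w) j) hL1
  simp only [mulVec_mulVec, ← Matrix.mul_assoc, hV, Matrix.one_mul] at this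
  simp only [mulVec, dotProduct, diagonal_mul, transpose_apply, mul_one, Pi.zero_apply, mul_zero,
    Finset.sum_const_zero, ← Finset.mul_sum] at this
  exact (mul_eq_zero.mp this).resolve_left hj

theorem Matrix.exists_ne_of_sum_col_eq_zero [Nontrivial R] (hV : Vᵀ * V = 1) {j : ι}
    (hj : ∑ p, V p j = 0) : ∃ p q, V p j ≠ V q j := by
  by_contra! hconst
  have h1 := congrFun (congrFun hV j) j
  simp only [mul_apply, transpose_apply, one_apply_eq] at h1
  have hsum : ∑ p, V p j * V p j = (∑ p, V p j) * V j j := by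
    rw [Finset.sum_mul]
    exact Finset.sum_congr rfl fun p _ => by rw [hconst p j]
  rw [hsum, hj, zero_mul] at h1
  exact zero_ne_one h1

theorem Matrix.col_eq_of_sum_col_eq_zero (hV : Vᵀ * V = 1) {j₀ : ι}
    (h : ∀ j ≠ j₀, ∑ p, V p j = 0) (p q : ι) : V p j₀ = V q j₀ := by
  have hrow (p : ι) : V p j₀ * ∑ r, V r j₀ = 1 := by
    have hone : (V *ᵥ (Vᵀ *ᵥ fun _ => 1)) p = 1 := by
      rw [mulVec_mulVec, mul_eq_one_comm.mp hV, one_mulVec]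
    rw [← hone]
    simp only [mulVec, dotProduct, transpose_apply, mul_one]
    exact (Finset.sum_eq_single (f := fun j => V p j * ∑ r, V r j) j₀
      (fun j _ hj => by rw [h j hj, mul_zero]) (by simp)).symm
  calc V p j₀ = V p j₀ * (V q j₀ * ∑ r, V r j₀) := by rw [hrow, mul_one]
    _ = V q j₀ * (V p j₀ * ∑ r, V r j₀) := by ring
    _ = V q j₀ := by rw [hrow, mul_one]

end ClosedLoop

/-- for the closed-loop system `x(k+1) = (I_N ⊗ A − L ⊗ BK) x(k)` on a
connected graph with Laplacian eigenvalues `0 = λ_1 < λ_2 ≤ … ≤ λ_N`, consensus is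
reached asymptotically for every initial state iff
`r(K) = max_{i ≥ 2} ρ(H(λ_i, K)) < 1`, i.e. iff `ρ(H(λ_i, K)) < 1` for all `i ≠ 1`. -/
theorem stmt_3 (n : ℕ) (τ : ℝ)
    (N : ℕ) (hN : 2 ≤ N) (L : Matrix (Fin N) (Fin N) ℝ)
    (lam : Fin N → ℝ)
    (hlampos : ∀ i : Fin N, i ≠ ⟨0, by omega⟩ → 0 < lam i)
    (hL1 : L *ᵥ (fun _ => (1 : ℝ)) = 0)
    (hdiag : ∃ V : Matrix (Fin N) (Fin N) ℝ, Vᵀ * V = 1 ∧ L = V * Matrix.diagonal lam * Vᵀ)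
    (K : Matrix (Fin 1) (Fin n) ℝ) :
    (∀ x0 : Fin N × Fin n → ℝ, ∀ i j : Fin N, ∀ l : Fin n,
        Tendsto (fun k : ℕ =>
            ((((1 : Matrix (Fin N) (Fin N) ℝ) ⊗ₖ Amat n τ - L ⊗ₖ (Bmat n τ * K)) ^ k) *ᵥ x0) (i, l)
          - ((((1 : Matrix (Fin N) (Fin N) ℝ) ⊗ₖ Amat n τ - L ⊗ₖ (Bmat n τ * K)) ^ k) *ᵥ x0) (j, l))
          atTop (nhds 0))
    ↔ (∀ i : Fin N, i ≠ ⟨0, by omega⟩ → specRad (Hmat n τ (lam i) K) < 1) := by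
  obtain ⟨V, hV, rfl⟩ := hdiag
  have hsum (j : Fin N) (hj : j ≠ ⟨0, by omega⟩) : ∑ p, V p j = 0 :=
    sum_col_eq_zero_of_mulVec_const_eq_zero hV hL1 (hlampos j hj).ne'
  constructor
  · intro hcons i hi
    obtain ⟨p, q, hpq⟩ := exists_ne_of_sum_col_eq_zero hV (hsum i hi)
    rw [← tendsto_pow_mulVec_iff_specRad_lt_one]
    intro y l
    have hmode (k : ℕ) := closedLoop_pow_mulVec_of_eigenvector (Amat n τ) (Bmat n τ * K)
      (mulVec_col_of_transpose_mul_self_eq_one (lam := lam) hV i) y k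
    have h := (hcons (fun x => V.col i x.1 * y x.2) p q l).const_mul (V p i - V q i)⁻¹
    simp only [hmode] at h
    simpa only [Hmat, col_apply, ← sub_mul, ← mul_assoc, inv_mul_cancel₀ (sub_ne_zero.mpr hpq),
      one_mul, mul_zero] using h
  · intro hρ x p q l
    simp only [closedLoop_pow_mulVec hV, Finset.sum_apply, col_apply, ← Finset.sum_sub_distrib,
      ← sub_mul]
    rw [← Finset.sum_const_zero (s := Finset.univ (α := Fin N)) (M := ℝ)]
    refine tendsto_finsetSum _ fun j _ => ?_
    by_cases hj : j = ⟨0, by omega⟩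
    · subst hj
      simp [col_eq_of_sum_col_eq_zero hV hsum p q]
    · simpa only [Hmat, mul_zero] using
        ((tendsto_pow_mulVec_iff_specRad_lt_one _).mpr (hρ j hj) _ l).const_mul _
end

section
/- Let n ≥ 1, τ > 0, and let A, B, H(λ,K) be as in the context. Let 0 < λ_2 ≤ λ_N be real numbers. Then for every row vector K ∈ ℝ^{1×n}, max( ρ(H(λ_2,K)), ρ(H(λ_N,K)) ) ≥ ((λ_N − λ_2)/(λ_N + λ_2))^{1/n}, where ρ denotes the spectral radius. In particular, the consensus convergence rate r(K) = max_{i=2,…,N} ρ(H(λ_i,K)) of the high-order multi-agent system on any connected graph whose Laplacian has smallest nonzero eigenvalue λ_2 and largest eigenvalue λ_N is bounded below by ((λ_N − λ_2)/(λ_N + λ_2))^{1/n}. -/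
open Matrix

/-!
Since `B K` has rank one and `det A = 1`, the matrix determinant lemma gives
`det H(λ, K) = 1 - λ c` with `c = K A⁻¹ B` independent of `λ`. The determinant is the product of
the `n` eigenvalues, so `|1 - λ c| ≤ ρ(H(λ, K))ⁿ`. Finally no `c` makes both `|1 - λ₂ c|` and
`|1 - λ_N c|` small, because `λ_N (1 - λ₂ c) - λ₂ (1 - λ_N c) = λ_N - λ₂`.
-/

theorem Matrix.norm_det_le_pow_of_forall_mem_spectrum {ι : Type*} [Fintype ι] [DecidableEq ι]
    (M : Matrix ι ι ℂ) {r : ℝ} (h : ∀ μ ∈ spectrum ℂ M, ‖μ‖ ≤ r) :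
    ‖M.det‖ ≤ r ^ Fintype.card ι := by
  have hroots : ∀ μ ∈ M.charpoly.roots, normHom μ ≤ r := fun μ hμ =>
    h μ (mem_spectrum_of_isRoot_charpoly (Polynomial.isRoot_of_mem_roots hμ))
  calc ‖M.det‖ = (M.charpoly.roots.map (normHom : ℂ →*₀ ℝ)).prod := by
        rw [det_eq_prod_roots_charpoly]; exact map_multiset_prod (normHom : ℂ →*₀ ℝ) _
    _ ≤ r ^ Multiset.card M.charpoly.roots :=
        Multiset.prod_map_le_pow_card (fun x _ => (norm_nonneg x :)) hroots
    _ = r ^ Fintype.card ι := by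
        rw [IsAlgClosed.card_roots_eq_natDegree, charpoly_natDegree_eq_dim]

theorem specRad_nonneg {n : ℕ} (M : Matrix (Fin n) (Fin n) ℝ) : 0 ≤ specRad M :=
  Real.sSup_nonneg (by rintro _ ⟨z, -, rfl⟩; exact norm_nonneg z)

theorem norm_le_specRad {n : ℕ} (M : Matrix (Fin n) (Fin n) ℝ) {μ : ℂ}
    (hμ : μ ∈ spectrum ℂ (M.map (Complex.ofReal ·))) : ‖μ‖ ≤ specRad M :=
  le_csSup ((Matrix.finite_spectrum _).image _).bddAbove ⟨μ, hμ, rfl⟩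

theorem abs_det_le_specRad_pow {n : ℕ} (M : Matrix (Fin n) (Fin n) ℝ) :
    |M.det| ≤ specRad M ^ n := by
  have hdet : (M.map (Complex.ofReal ·)).det = M.det := (Complex.ofRealHom.map_det M).symm
  simpa [hdet] using (M.map (Complex.ofReal ·)).norm_det_le_pow_of_forall_mem_spectrum
    fun μ => norm_le_specRad M

theorem Matrix.det_sub_smul_mul_of_isUnit {m R : Type*} [Fintype m] [DecidableEq m] [CommRing R]
    {A : Matrix m m R} (hA : IsUnit A.det) (U : Matrix m (Fin 1) R) (V : Matrix (Fin 1) m R)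
    (lam : R) : (A - lam • (U * V)).det = A.det * (1 - lam * (V * A⁻¹ * U) 0 0) := by
  rw [sub_eq_add_neg, ← neg_smul, ← Matrix.smul_mul, det_add_mul _ _ hA]
  simp [sub_eq_add_neg]

theorem det_Amat (n : ℕ) (τ : ℝ) : (Amat n τ).det = 1 := by
  rw [det_of_isUpperTriangular]
  · simp [Amat]
  · intro i j (hij : j < i)
    have hne : (j : ℕ) ≠ i ∧ (j : ℕ) ≠ i + 1 := by omega
    simp [Amat, hne]

theorem det_Hmat (n : ℕ) (τ lam : ℝ) (K : Matrix (Fin 1) (Fin n) ℝ) :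
    (Hmat n τ lam K).det = 1 - lam * (K * (Amat n τ)⁻¹ * Bmat n τ) 0 0 := by
  rw [Hmat, det_sub_smul_mul_of_isUnit (by simp [det_Amat]), det_Amat, one_mul]

theorem div_le_max_abs_one_sub_mul {a b : ℝ} (ha : 0 < a) (hb : 0 < b) (c : ℝ) :
    (b - a) / (b + a) ≤ max |1 - a * c| |1 - b * c| := by
  rw [div_le_iff₀ (by positivity)]
  calc b - a = b * (1 - a * c) - a * (1 - b * c) := by ring
    _ ≤ b * |1 - a * c| + a * |1 - b * c| := by
        have hb' := mul_le_mul_of_nonneg_left (le_abs_self (1 - a * c)) hb.le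
        have ha' := mul_le_mul_of_nonneg_left (neg_abs_le (1 - b * c)) ha.le
        linarith
    _ ≤ b * max |1 - a * c| |1 - b * c| + a * max |1 - a * c| |1 - b * c| := by gcongr <;> simp
    _ = max |1 - a * c| |1 - b * c| * (b + a) := by ring

theorem stmt_6_general (n : ℕ) (hn : 1 ≤ n) (τ : ℝ)
    (l2 lN : ℝ) (h2 : 0 < l2) (h2N : l2 ≤ lN)
    (K : Matrix (Fin 1) (Fin n) ℝ) :
    ((lN - l2) / (lN + l2)) ^ ((1 : ℝ) / n)
      ≤ max (specRad (Hmat n τ l2 K)) (specRad (Hmat n τ lN K)) := by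
  set c := (K * (Amat n τ)⁻¹ * Bmat n τ) 0 0
  set ρ := max (specRad (Hmat n τ l2 K)) (specRad (Hmat n τ lN K))
  have hdet_le (lam : ℝ) (h : specRad (Hmat n τ lam K) ≤ ρ) : |1 - lam * c| ≤ ρ ^ n := by
    rw [← det_Hmat]
    exact (abs_det_le_specRad_pow _).trans (pow_le_pow_left₀ (specRad_nonneg _) h n)
  have hratio : (lN - l2) / (lN + l2) ≤ ρ ^ n :=
    (div_le_max_abs_one_sub_mul h2 (h2.trans_le h2N) c).trans
      (max_le (hdet_le l2 (le_max_left _ _)) (hdet_le lN (le_max_right _ _)))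
  rw [one_div, Real.rpow_inv_le_iff_of_pos (div_nonneg (by linarith) (by linarith))
    ((specRad_nonneg _).trans (le_max_left _ _)) (Nat.cast_pos.mpr hn), Real.rpow_natCast]
  exact hratio

/-- for all `0 < λ₂ ≤ λ_N` and every gain row vector `K`,
`max(ρ(H(λ₂,K)), ρ(H(λ_N,K))) ≥ ((λ_N − λ₂)/(λ_N + λ₂))^{1/n}` (real power). -/
theorem stmt_6 (n : ℕ) (hn : 1 ≤ n) (τ : ℝ) (hτ : 0 < τ)
    (l2 lN : ℝ) (h2 : 0 < l2) (h2N : l2 ≤ lN)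
    (K : Matrix (Fin 1) (Fin n) ℝ) :
    ((lN - l2) / (lN + l2)) ^ ((1 : ℝ) / n)
      ≤ max (specRad (Hmat n τ l2 K)) (specRad (Hmat n τ lN K)) :=
  stmt_6_general n hn τ l2 lN h2 h2N K
end

section
/- Let n ≥ 1, τ > 0, and let A, B, H(λ,K) be as in the context. Suppose λ_2 = 1 and λ_N = N > 1 (the two distinct nonzero Laplacian eigenvalues of an unweighted star graph on N nodes). Set r* = ((N − 1)/(N + 1))^{1/n} and let K* be defined by the recursion: f_q = ((−1)^q / (2N)) [ (r*)^{−n+2q} C(n,q)(N − 1) − C(n, n−q)(N + 1) ] for q = 1,…,n; K*_n = f_1/τ; and for j = n−1 down to 1, K*_j = (1/τ^{n+1−j}) ( f_{n+1−j} + Σ_{i=1}^{n−j} K*_{j+i} (−1)^{i+1} τ^{n−j+1−i} C(j−1+i, j−1) ). Then every complex eigenvalue of H(1,K*) and every complex eigenvalue of H(N,K*) has modulus exactly r*; in particular max( ρ(H(1,K*)), ρ(H(N,K*)) ) = r*, so the lower bound ((N−1)/(N+1))^{1/n} on the convergence rate is attained. -/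
open Matrix

/-- `r* = ((λ_N − λ₂)/(λ_N + λ₂))^{1/n}` (real power). -/
noncomputable def rstar (n : ℕ) (l2 lN : ℝ) : ℝ :=
  ((lN - l2) / (lN + l2)) ^ ((1 : ℝ) / n)

/-- `f_q = ((−1)^q/(2λ₂λ_N)) [ (r*)^{−n+2q} C(n,q)(λ_N−λ₂) − C(n,n−q)(λ_N+λ₂) ]`
(the power of `r*` with the possibly negative real exponent `2q − n`). -/
noncomputable def fcoef (n : ℕ) (l2 lN : ℝ) (q : ℕ) : ℝ :=
  ((-1 : ℝ) ^ q / (2 * l2 * lN)) *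
    ((rstar n l2 lN) ^ (2 * (q : ℝ) - (n : ℝ)) * (Nat.choose n q) * (lN - l2)
      - (Nat.choose n (n - q)) * (lN + l2))

/-- `KstarAux n τ l2 lN d` is the optimal gain `K*_{n-d}` (1-based index `j = n − d`),
defined by the backward recursion `K*_n = f_1/τ` and, for `j = n−1,…,1`,
`K*_j = τ^{-(n+1−j)} ( f_{n+1−j} + ∑_{i=1}^{n−j} K*_{j+i} (−1)^{i+1} τ^{n−j+1−i} C(j−1+i, j−1) )`. -/
noncomputable def KstarAux (n : ℕ) (τ l2 lN : ℝ) (d : ℕ) : ℝ :=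
  Nat.strongRecOn d (fun d ih =>
    if d = 0 then fcoef n l2 lN 1 / τ
    else (1 / τ ^ (d + 1)) * (fcoef n l2 lN (d + 1) +
      ∑ i ∈ (Finset.Icc 1 d).attach,
        ih (d - i.1) (by have := Finset.mem_Icc.mp i.2; omega) * (-1 : ℝ) ^ (i.1 + 1) *
          τ ^ (d + 1 - i.1) * (Nat.choose (n - d - 1 + i.1) (n - d - 1) : ℝ)))

open Finset

/-!
By its first `n - 1` rows, an eigenvector of `H(λ, K)` for the eigenvalue `z` satisfies
`τ^m v_m = (z - 1)^m v_0`, so its last row is the characteristic equation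
`(z - 1)^n + λ ∑_m K_m τ^(n-m) (z - 1)^m = 0`. The backward recursion defining `K*` says exactly
that this sum, expanded in powers of `z`, has the coefficients `f_q`; and since
`r^n = (λ_N - λ₂)/(λ_N + λ₂)`, these are the coefficients of
`(λ_N + λ₂)/(2 λ₂ λ_N) ((z - r²)^n - (z - 1)^n)`. For `λ = λ₂` and `λ = λ_N` the characteristic
equation therefore reads `(λ_N + λ₂)(z - r²)^n = ∓(λ_N - λ₂)(z - 1)^n`, which forces
`|z - r²| = r |z - 1|`, and this Apollonius circle is the circle `|z| = r`.
-/

section Binomial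

variable {R : Type*} [CommRing R]

theorem sum_range_neg_one_pow_choose_mul_pow_sub_one (n : ℕ) (s z : R) :
    ∑ q ∈ range n, (-1) ^ (q + 1) * (n.choose (q + 1) : R) * (s ^ (q + 1) - 1) * z ^ (n - 1 - q)
      = (z - s) ^ n - (z - 1) ^ n := by
  have hexp (x : R) : (z - x) ^ n = ∑ i ∈ range (n + 1), (-x) ^ i * z ^ (n - i) * n.choose i := by
    rw [← add_pow]; ring
  rw [hexp, hexp, ← sum_sub_distrib, sum_range_succ']
  simp only [pow_zero, sub_self, add_zero]
  refine sum_congr rfl fun q _ => ?_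
  rw [show n - (q + 1) = n - 1 - q by omega, neg_pow s, neg_pow (1 : R)]
  ring

theorem sum_mul_sub_one_pow_eq_sum_mul_pow (n : ℕ) (a : ℕ → R) (z : R) :
    ∑ e ∈ range n, a e * (z - 1) ^ (n - 1 - e)
      = ∑ d ∈ range n,
          (∑ e ∈ range (d + 1), a e * (-1) ^ (d - e) * ((n - 1 - e).choose (d - e) : R))
            * z ^ (n - 1 - d) := by
  simp_rw [sum_mul]
  rw [sum_comm' (t' := range n) (s' := fun e => Ico e n) (fun d e => by
    simp only [mem_range, mem_Ico]; omega)]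
  refine sum_congr rfl fun e he => ?_
  rw [mem_range] at he
  obtain ⟨m, rfl⟩ : ∃ m, n = e + m + 1 := ⟨n - e - 1, by omega⟩
  rw [sum_Ico_eq_sum_range, show e + m + 1 - e = m + 1 by omega,
    show e + m + 1 - 1 - e = m by omega, sub_eq_neg_add, add_pow, mul_sum]
  refine sum_congr rfl fun i hi => ?_
  rw [mem_range] at hi
  rw [show e + i - e = i by omega, show e + m + 1 - 1 - (e + i) = m - i by omega]
  ring

end Binomial

theorem Hmat_apply (n : ℕ) (τ lam : ℝ) (K : Matrix (Fin 1) (Fin n) ℝ) (i j : Fin n) :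
    Hmat n τ lam K i j =
      Amat n τ i j - if (i : ℕ) = n - 1 then lam * τ * K 0 j else 0 := by
  simp only [Hmat, Matrix.sub_apply, Matrix.smul_apply, Bmat, mul_apply, of_apply,
    Fin.sum_univ_one, smul_eq_mul]
  split_ifs <;> ring

theorem Amat_castSucc_apply (n : ℕ) (τ : ℝ) (i : Fin n) (j : Fin (n + 1)) :
    Amat (n + 1) τ i.castSucc j =
      (if j = i.castSucc then 1 else 0) + if j = i.succ then τ else 0 := by
  simp only [Amat, of_apply, Fin.ext_iff, Fin.val_castSucc, Fin.val_succ]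
  split_ifs <;> first | (exfalso; omega) | ring

theorem Amat_last_apply (n : ℕ) (τ : ℝ) (j : Fin (n + 1)) :
    Amat (n + 1) τ (Fin.last n) j = if j = Fin.last n then 1 else 0 := by
  simp only [Amat, of_apply, Fin.ext_iff, Fin.val_last]
  split_ifs <;> first | rfl | omega

theorem Hmat_map_mulVec_castSucc (n : ℕ) (τ lam : ℝ) (K : Matrix (Fin 1) (Fin (n + 1)) ℝ)
    (v : Fin (n + 1) → ℂ) (i : Fin n) :
    ((Hmat (n + 1) τ lam K).map (Complex.ofReal ·) *ᵥ v) i.castSucc =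
      v i.castSucc + τ * v i.succ := by
  simp only [mulVec, dotProduct, map_apply, Hmat_apply, Amat_castSucc_apply, Fin.val_castSucc,
    Nat.add_sub_cancel, i.isLt.ne, if_false, sub_zero, Complex.ofReal_add,
    apply_ite Complex.ofReal, Complex.ofReal_one, Complex.ofReal_zero, add_mul, ite_mul, one_mul,
    zero_mul, sum_add_distrib, sum_ite_eq', mem_univ, if_true]

theorem Hmat_map_mulVec_last (n : ℕ) (τ lam : ℝ) (K : Matrix (Fin 1) (Fin (n + 1)) ℝ)
    (v : Fin (n + 1) → ℂ) :
    ((Hmat (n + 1) τ lam K).map (Complex.ofReal ·) *ᵥ v) (Fin.last n) =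
      v (Fin.last n) - lam * τ * ∑ j, K 0 j * v j := by
  simp only [mulVec, dotProduct, map_apply, Hmat_apply, Amat_last_apply, Fin.val_last,
    Nat.add_sub_cancel, if_true, Complex.ofReal_sub, apply_ite Complex.ofReal,
    Complex.ofReal_one, Complex.ofReal_zero, Complex.ofReal_mul, sub_mul, ite_mul, one_mul,
    zero_mul, sum_sub_distrib, sum_ite_eq', mem_univ, mul_sum, mul_assoc]

theorem sub_one_pow_add_mul_sum_eq_zero_of_mem_spectrum {n : ℕ} {τ lam : ℝ} (hτ : τ ≠ 0)
    {K : Matrix (Fin 1) (Fin n) ℝ} {z : ℂ}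
    (hz : z ∈ spectrum ℂ ((Hmat n τ lam K).map (Complex.ofReal ·))) :
    (z - 1) ^ n + lam * ∑ m : Fin n, (K 0 m : ℂ) * τ ^ (n - m) * (z - 1) ^ (m : ℕ) = 0 := by
  rw [← spectrum_toLin', ← Module.End.hasEigenvalue_iff_mem_spectrum] at hz
  obtain ⟨v, hv⟩ := hz.exists_hasEigenvector
  have hrow (i : Fin n) := congrFun hv.apply_eq_smul i
  simp only [toLin'_apply, Pi.smul_apply, smul_eq_mul] at hrow
  obtain _ | n := n
  · exact absurd (Subsingleton.elim v 0) hv.2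
  have hstep (i : Fin n) : v i.castSucc + τ * v i.succ = z * v i.castSucc := by
    rw [← Hmat_map_mulVec_castSucc n τ lam K, hrow]
  have hlast : v (Fin.last n) - lam * τ * ∑ j, K 0 j * v j = z * v (Fin.last n) := by
    rw [← Hmat_map_mulVec_last, hrow]
  have hpow (m : Fin (n + 1)) : (τ : ℂ) ^ (m : ℕ) * v m = (z - 1) ^ (m : ℕ) * v 0 := by
    induction m using Fin.induction with
    | zero => simp
    | succ i ih =>
      rw [Fin.val_castSucc] at ih
      rw [Fin.val_succ, pow_succ, pow_succ]
      linear_combination (τ : ℂ) ^ (i : ℕ) * hstep i + (z - 1) * ih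
  have hv0 : v 0 ≠ 0 := by
    intro h0
    refine hv.2 (funext fun m => ?_)
    have hm := hpow m
    rw [h0, mul_zero] at hm
    exact (mul_eq_zero.1 hm).resolve_left (pow_ne_zero _ (Complex.ofReal_ne_zero.2 hτ))
  have hsum : (∑ m : Fin (n + 1), (K 0 m : ℂ) * τ ^ (n + 1 - m) * (z - 1) ^ (m : ℕ)) * v 0
      = τ ^ (n + 1) * ∑ j, (K 0 j : ℂ) * v j := by
    rw [sum_mul, mul_sum]
    refine sum_congr rfl fun m _ => ?_
    rw [mul_assoc, ← hpow m, ← pow_sub_mul_pow (τ : ℂ) m.isLt.le]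
    ring
  have hpow_last := hpow (Fin.last n)
  rw [Fin.val_last] at hpow_last
  refine (mul_eq_zero.1 ?_).resolve_right hv0
  linear_combination (lam : ℂ) * hsum - (z - 1) * hpow_last - (τ : ℂ) ^ n * hlast

theorem Complex.norm_eq_of_norm_sub_sq_eq_mul_norm_sub_one {r : ℝ} (hr : 0 ≤ r) (hr1 : r ≠ 1)
    {z : ℂ} (h : ‖z - (r ^ 2 : ℝ)‖ = r * ‖z - 1‖) : ‖z‖ = r := by
  have hsq := congrArg (· ^ 2) h
  simp only [mul_pow, Complex.sq_norm, Complex.normSq_apply, Complex.sub_re, Complex.sub_im,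
    Complex.ofReal_re, Complex.ofReal_im, Complex.one_re, Complex.one_im] at hsq
  have hfac : (1 - r) * (1 + r) ≠ 0 := mul_ne_zero (sub_ne_zero.2 hr1.symm) (by positivity)
  refine (pow_left_inj₀ (norm_nonneg z) hr two_ne_zero).1 (mul_left_cancel₀ hfac ?_)
  rw [Complex.sq_norm, Complex.normSq_apply]
  linear_combination hsq

theorem specRad_eq_of_forall_norm_eq {n : ℕ} (hn : n ≠ 0) (M : Matrix (Fin n) (Fin n) ℝ) {r : ℝ}
    (h : ∀ z ∈ spectrum ℂ (M.map (Complex.ofReal ·)), ‖z‖ = r) : specRad M = r := by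
  have : Nonempty (Fin n) := ⟨⟨0, Nat.pos_of_ne_zero hn⟩⟩
  have hne := spectrum.nonempty_of_isAlgClosed_of_finiteDimensional ℂ (M.map (Complex.ofReal ·))
  rw [specRad, Set.eq_singleton_iff_nonempty_unique_mem.2
    ⟨hne.image _, by rintro _ ⟨z, hz, rfl⟩; exact h z hz⟩, csSup_singleton]

section Gain

variable {n : ℕ} {τ l2 lN : ℝ}

theorem KstarAux_mul_pow (hτ : τ ≠ 0) (d : ℕ) :
    KstarAux n τ l2 lN d * τ ^ (d + 1) = fcoef n l2 lN (d + 1) +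
      ∑ i ∈ Icc 1 d, KstarAux n τ l2 lN (d - i) * (-1) ^ (i + 1) * τ ^ (d + 1 - i) *
        ((n - d - 1 + i).choose (n - d - 1) : ℝ) := by
  have h : KstarAux n τ l2 lN d =
      if d = 0 then fcoef n l2 lN 1 / τ
      else 1 / τ ^ (d + 1) * (fcoef n l2 lN (d + 1) +
        ∑ i ∈ (Icc 1 d).attach, KstarAux n τ l2 lN (d - i.1) * (-1) ^ (i.1 + 1) *
          τ ^ (d + 1 - i.1) * ((n - d - 1 + i.1).choose (n - d - 1) : ℝ)) := by
    unfold KstarAux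
    rw [Nat.strongRecOn_eq]
  rw [h, sum_attach (Icc 1 d) (fun i => KstarAux n τ l2 lN (d - i) * (-1) ^ (i + 1) *
      τ ^ (d + 1 - i) * ((n - d - 1 + i).choose (n - d - 1) : ℝ))]
  split_ifs with hd
  · subst hd
    simp [div_mul_cancel₀ _ hτ]
  · field_simp

theorem fcoef_succ_eq_sum_KstarAux (hτ : τ ≠ 0) {d : ℕ} (hd : d < n) :
    fcoef n l2 lN (d + 1) = ∑ e ∈ range (d + 1),
      KstarAux n τ l2 lN e * τ ^ (e + 1) * (-1) ^ (d - e) * ((n - 1 - e).choose (d - e) : ℝ) := by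
  have h := KstarAux_mul_pow (n := n) (l2 := l2) (lN := lN) hτ d
  rw [← Ico_add_one_right_eq_Icc, sum_Ico_eq_sum_range, Nat.add_sub_cancel] at h
  rw [← sum_range_reflect, sum_range_succ', Nat.add_sub_cancel, eq_sub_of_add_eq h.symm,
    sub_eq_add_neg, ← sum_neg_distrib]
  simp only [Nat.sub_zero, Nat.sub_self, pow_zero, Nat.choose_zero_right, Nat.cast_one, mul_one]
  rw [add_comm]
  congr 1
  refine sum_congr rfl fun i hi => ?_
  rw [mem_range] at hi
  rw [show d - (d - (i + 1)) = 1 + i by omega, show d - (i + 1) + 1 = d + 1 - (1 + i) by omega,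
    show n - 1 - (d - (i + 1)) = n - d - 1 + (1 + i) by omega, Nat.choose_symm_add, pow_succ,
    add_comm i 1]
  ring

theorem rstar_pos (h2 : 0 < l2) (hlt : l2 < lN) : 0 < rstar n l2 lN :=
  Real.rpow_pos_of_pos (div_pos (sub_pos.2 hlt) (by linarith)) _

theorem rstar_lt_one (hn : n ≠ 0) (h2 : 0 < l2) (hlt : l2 < lN) : rstar n l2 lN < 1 :=
  Real.rpow_lt_one (div_pos (sub_pos.2 hlt) (by linarith)).le
    ((div_lt_one (by linarith)).2 (by linarith)) (by positivity)

theorem rstar_pow (hn : n ≠ 0) (h2 : 0 < l2) (hlt : l2 < lN) :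
    rstar n l2 lN ^ n = (lN - l2) / (lN + l2) := by
  rw [rstar, one_div]
  exact Real.rpow_inv_natCast_pow (div_pos (sub_pos.2 hlt) (by linarith)).le hn

theorem fcoef_eq (hn : n ≠ 0) (h2 : 0 < l2) (hlt : l2 < lN) {q : ℕ} (hq : q ≤ n) :
    fcoef n l2 lN q = (-1) ^ q * n.choose q * ((lN + l2) / (2 * l2 * lN)) *
      ((rstar n l2 lN ^ 2) ^ q - 1) := by
  have hr := rstar_pos (n := n) h2 hlt
  have hpow : rstar n l2 lN ^ (2 * (q : ℝ) - n) = (rstar n l2 lN ^ 2) ^ q / rstar n l2 lN ^ n := by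
    rw [Real.rpow_sub hr, ← pow_mul, ← Real.rpow_natCast, ← Real.rpow_natCast]
    push_cast
    ring_nf
  rw [fcoef, hpow, rstar_pow hn h2 hlt, Nat.choose_symm hq]
  have : lN - l2 ≠ 0 := by linarith
  have : lN + l2 ≠ 0 := by linarith
  field_simp

theorem sum_KstarAux_mul_sub_one_pow (hτ : τ ≠ 0) (h2 : 0 < l2) (hlt : l2 < lN) (z : ℂ) :
    ∑ m : Fin n, (KstarAux n τ l2 lN (n - 1 - m) : ℂ) * τ ^ (n - m) * (z - 1) ^ (m : ℕ)
      = (lN + l2) / (2 * l2 * lN) * ((z - (rstar n l2 lN ^ 2 : ℝ)) ^ n - (z - 1) ^ n) := by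
  rw [Fin.sum_univ_eq_sum_range (fun m => (KstarAux n τ l2 lN (n - 1 - m) : ℂ) * τ ^ (n - m) *
    (z - 1) ^ m), ← sum_range_reflect]
  have hreflect : ∀ e ∈ range n,
      (KstarAux n τ l2 lN (n - 1 - (n - 1 - e)) : ℂ) * τ ^ (n - (n - 1 - e)) * (z - 1) ^ (n - 1 - e)
        = ((KstarAux n τ l2 lN e : ℂ) * τ ^ (e + 1)) * (z - 1) ^ (n - 1 - e) := by
    intro e he
    rw [mem_range] at he
    rw [show n - 1 - (n - 1 - e) = e by omega, show n - (n - 1 - e) = e + 1 by omega]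
  rw [sum_congr rfl hreflect, sum_mul_sub_one_pow_eq_sum_mul_pow,
    ← sum_range_neg_one_pow_choose_mul_pow_sub_one, mul_sum]
  refine sum_congr rfl fun d hd => ?_
  rw [mem_range] at hd
  have hf : ∑ e ∈ range (d + 1), (KstarAux n τ l2 lN e : ℂ) * τ ^ (e + 1) * (-1) ^ (d - e) *
      ((n - 1 - e).choose (d - e) : ℂ) = (fcoef n l2 lN (d + 1) : ℂ) := by
    rw [fcoef_succ_eq_sum_KstarAux hτ hd]
    push_cast
    rfl
  rw [hf, fcoef_eq (by omega) h2 hlt hd]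
  push_cast [Nat.succ_eq_add_one]
  ring

theorem norm_eq_rstar_of_mem_spectrum (hn : n ≠ 0) (hτ : τ ≠ 0) (h2 : 0 < l2) (hlt : l2 < lN)
    {lam : ℝ} (hlam : lam = l2 ∨ lam = lN) {z : ℂ}
    (hz : z ∈ spectrum ℂ ((Hmat n τ lam (of fun _ m => KstarAux n τ l2 lN (n - 1 - m))).map
      (Complex.ofReal ·))) :
    ‖z‖ = rstar n l2 lN := by
  have hchar := sub_one_pow_add_mul_sum_eq_zero_of_mem_spectrum hτ hz
  simp only [of_apply] at hchar
  rw [sum_KstarAux_mul_sub_one_pow hτ h2 hlt] at hchar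
  have hl2 : (l2 : ℂ) ≠ 0 := Complex.ofReal_ne_zero.2 h2.ne'
  have hlN : (lN : ℂ) ≠ 0 := Complex.ofReal_ne_zero.2 (by linarith)
  have hnorm : (lN + l2) * ‖z - (rstar n l2 lN ^ 2 : ℝ)‖ ^ n = (lN - l2) * ‖z - 1‖ ^ n := by
    have hsum : (0 : ℝ) < lN + l2 := by linarith
    have hdiff : (0 : ℝ) < lN - l2 := by linarith
    have hnorm_cast (w : ℂ) (hw : ‖w‖ = 1)
        (h : ((lN + l2 : ℝ) : ℂ) * (z - (rstar n l2 lN ^ 2 : ℝ)) ^ n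
          = w * (((lN - l2 : ℝ) : ℂ) * (z - 1) ^ n)) :
        (lN + l2) * ‖z - (rstar n l2 lN ^ 2 : ℝ)‖ ^ n = (lN - l2) * ‖z - 1‖ ^ n := by
      have := congrArg norm h
      rwa [norm_mul, norm_mul, norm_mul, hw, one_mul, norm_pow, norm_pow, Complex.norm_real,
        Complex.norm_real, Real.norm_of_nonneg hsum.le, Real.norm_of_nonneg hdiff.le] at this
    rcases hlam with rfl | rfl
    · refine hnorm_cast (-1) (by simp) ?_
      field_simp at hchar
      push_cast at hchar ⊢
      linear_combination hchar
    · refine hnorm_cast 1 (by simp) ?_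
      field_simp at hchar
      push_cast at hchar ⊢
      linear_combination hchar
  have hr := rstar_pos (n := n) h2 hlt
  refine Complex.norm_eq_of_norm_sub_sq_eq_mul_norm_sub_one hr.le (rstar_lt_one hn h2 hlt).ne
    ((pow_left_inj₀ (norm_nonneg _) (by positivity) hn).1 ?_)
  rw [mul_pow, rstar_pow hn h2 hlt, div_mul_eq_mul_div, eq_div_iff (by linarith)]
  linear_combination hnorm

end Gain

/-- for the star graph (nonzero Laplacian eigenvalues `λ₂ = 1`, `λ_N = N > 1`),
with `r* = ((N−1)/(N+1))^{1/n}` and `K*` given by the recursion of Theorem 2, every complex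
eigenvalue of `H(1,K*)` and of `H(N,K*)` has modulus exactly `r*`; in particular
`max(ρ(H(1,K*)), ρ(H(N,K*))) = r*`, so the lower bound on the convergence rate is attained. -/
theorem stmt_10 (n : ℕ) (hn : 1 ≤ n) (τ : ℝ) (hτ : 0 < τ) (N : ℕ) (hN : 1 < N) :
    (∀ z ∈ spectrum ℂ
        ((Hmat n τ 1 (Matrix.of fun _ m =>
            KstarAux n τ 1 (N : ℝ) (n - 1 - (m : ℕ)))).map (Complex.ofReal ·)),
      ‖z‖ = rstar n 1 (N : ℝ))
    ∧ (∀ z ∈ spectrum ℂ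
        ((Hmat n τ (N : ℝ) (Matrix.of fun _ m =>
            KstarAux n τ 1 (N : ℝ) (n - 1 - (m : ℕ)))).map (Complex.ofReal ·)),
      ‖z‖ = rstar n 1 (N : ℝ))
    ∧ max
        (specRad (Hmat n τ 1 (Matrix.of fun _ m => KstarAux n τ 1 (N : ℝ) (n - 1 - (m : ℕ)))))
        (specRad (Hmat n τ (N : ℝ) (Matrix.of fun _ m => KstarAux n τ 1 (N : ℝ) (n - 1 - (m : ℕ)))))
      = rstar n 1 (N : ℝ) := by
  have hn0 : n ≠ 0 := by omega
  have hN1 : (1 : ℝ) < N := by exact_mod_cast hN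
  have hnorm {lam : ℝ} (hlam : lam = 1 ∨ lam = N) :=
    fun z hz => norm_eq_rstar_of_mem_spectrum (z := z) hn0 hτ.ne' one_pos hN1 hlam hz
  refine ⟨hnorm (Or.inl rfl), hnorm (Or.inr rfl), ?_⟩
  rw [specRad_eq_of_forall_norm_eq hn0 _ (hnorm (Or.inl rfl)),
    specRad_eq_of_forall_norm_eq hn0 _ (hnorm (Or.inr rfl)), max_self]
end

section
/- Let n ≥ 1, τ > 0, and let A, B, H(λ,K) be as in the context. Let λ ≠ 0 be a real number and define the row vector K(λ) by K(λ)_m = C(n, m−1)/(λ τ^{n−m+1}) for m = 1,…,n. Then det(zI_n − H(λ,K(λ))) = z^n for all z ∈ ℂ, and consequently the matrix H(λ,K(λ)) = A − λBK(λ) is nilpotent: (A − λBK(λ))^n = 0. -/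
open Matrix

/-- The deadbeat gain `K(λ)` with 1-based entries `K(λ)_m = C(n, m−1)/(λ τ^{n−m+1})`
(so the 0-based entry at `m : Fin n` is `C(n, m)/(λ τ^{n−m})`). -/
noncomputable def Kdeadbeat (n : ℕ) (τ lam : ℝ) : Matrix (Fin 1) (Fin n) ℝ :=
  Matrix.of fun _ m => (Nat.choose n (m : ℕ) : ℝ) / (lam * τ ^ (n - (m : ℕ)))

/-!
Conjugation by the lower triangular scaled Pascal matrix `Q k j = τ ^ j * C(k, j)` (row `k` holds
the coefficients of `(1 + τ x) ^ k`) turns `H(λ, K(λ))` into the nilpotent shift `J`. Multiplying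
by `A = 1 + τ J` on the right is multiplication by `1 + τ x`, which moves every row of `Q` up one
place by Pascal's rule, except that the last row becomes the truncated coefficient vector of
`(1 + τ x) ^ n`. The feedback term `λ Q B K(λ)` is exactly that row, so `Q H = J Q`.
Hence `H` has the characteristic polynomial `X ^ n` of `J`, and Cayley–Hamilton gives `H ^ n = 0`.
-/

open Polynomial

section Shift

variable (R : Type*) (n : ℕ)

def shiftMatrix [Zero R] [One R] : Matrix (Fin n) (Fin n) R :=
  Matrix.of fun i j => if (j : ℕ) = i + 1 then 1 else 0

variable {R n}

lemma shiftMatrix_mul_apply [Semiring R] (M : Matrix (Fin n) (Fin n) R) (i j : Fin n) :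
    (shiftMatrix R n * M) i j = if h : (i : ℕ) + 1 < n then M ⟨i + 1, h⟩ j else 0 := by
  split_ifs with h
  · rw [mul_apply, Finset.sum_eq_single ⟨i + 1, h⟩]
    · simp [shiftMatrix]
    · intro l _ hl
      simp [shiftMatrix, show (l : ℕ) ≠ i + 1 from fun e => hl (Fin.ext e)]
    · simp
  · refine (mul_apply ..).trans (Finset.sum_eq_zero fun l _ => ?_)
    simp [shiftMatrix, show (l : ℕ) ≠ i + 1 by omega]

lemma mul_shiftMatrix_apply [Semiring R] (M : Matrix (Fin n) (Fin n) R) (i j : Fin n) :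
    (M * shiftMatrix R n) i j = if h : 0 < (j : ℕ) then M i ⟨j - 1, by omega⟩ else 0 := by
  split_ifs with h
  · rw [mul_apply, Finset.sum_eq_single ⟨j - 1, by omega⟩]
    · simp [shiftMatrix]; omega
    · intro l _ hl
      simp [shiftMatrix, Fin.ext_iff] at hl ⊢
      omega
    · simp
  · refine (mul_apply ..).trans (Finset.sum_eq_zero fun l _ => ?_)
    simp [shiftMatrix, show (j : ℕ) ≠ l + 1 by omega]

lemma shiftMatrix_isUpperTriangular [Zero R] [One R] : (shiftMatrix R n).IsUpperTriangular := by
  intro i j (hji : j < i)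
  simp [shiftMatrix, show (j : ℕ) ≠ i + 1 by omega]

lemma charpoly_shiftMatrix [CommRing R] : (shiftMatrix R n).charpoly = X ^ n := by
  rw [charpoly_of_isUpperTriangular _ shiftMatrix_isUpperTriangular]
  simp [shiftMatrix]

end Shift

lemma Matrix.charpoly_eq_of_mul_eq_mul {ι R : Type*} [Fintype ι] [DecidableEq ι] [CommRing R]
    {P M N : Matrix ι ι R} (hP : IsUnit P.det) (h : P * M = N * P) :
    M.charpoly = N.charpoly := by
  have hM : M = P⁻¹ * (N * P) := by
    rw [← h, ← Matrix.mul_assoc, nonsing_inv_mul _ hP, Matrix.one_mul]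
  rw [hM, charpoly_mul_comm, Matrix.mul_assoc, mul_nonsing_inv _ hP, Matrix.mul_one]

section ScaledPascal

variable {R : Type*} [CommRing R] (n : ℕ) (τ : R)

def scaledPascal : Matrix (Fin n) (Fin n) R :=
  Matrix.of fun k j => τ ^ (j : ℕ) * (k : ℕ).choose j

variable {n τ}

lemma scaledPascal_isLowerTriangular : (scaledPascal n τ).IsLowerTriangular := by
  intro k j (hkj : k < j)
  simp [scaledPascal, Nat.choose_eq_zero_of_lt (show (k : ℕ) < j from hkj)]

lemma isUnit_det_scaledPascal (hτ : IsUnit τ) : IsUnit (scaledPascal n τ).det := by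
  rw [det_of_isLowerTriangular _ scaledPascal_isLowerTriangular]
  simpa [scaledPascal] using IsUnit.prod_univ_iff.mpr fun j : Fin n => hτ.pow (j : ℕ)

end ScaledPascal

lemma Amat_eq_one_add_smul_shiftMatrix (n : ℕ) (τ : ℝ) :
    Amat n τ = 1 + τ • shiftMatrix ℝ n := by
  ext i j
  rcases eq_or_ne i j with rfl | h
  · simp [Amat, shiftMatrix]
  · simp [Amat, shiftMatrix, one_apply_ne h, Fin.val_inj, Ne.symm h]

lemma scaledPascal_mul_Amat_apply (n : ℕ) (τ : ℝ) (k j : Fin n) :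
    (scaledPascal n τ * Amat n τ) k j = τ ^ (j : ℕ) * ((k : ℕ) + 1).choose j := by
  rw [Amat_eq_one_add_smul_shiftMatrix, Matrix.mul_add, Matrix.mul_one, Matrix.mul_smul,
    Matrix.add_apply, Matrix.smul_apply, mul_shiftMatrix_apply]
  split_ifs with hj
  · obtain ⟨j', hj'⟩ : ∃ j', (j : ℕ) = j' + 1 := ⟨_, (Nat.succ_pred_eq_of_pos hj).symm⟩
    simp only [scaledPascal, of_apply, hj', Nat.add_sub_cancel, Nat.choose_succ_succ', smul_eq_mul]
    push_cast
    ring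
  · simp [scaledPascal, show (j : ℕ) = 0 by omega]

lemma scaledPascal_mul_Bmat_apply (n : ℕ) (τ : ℝ) (k : Fin n) (c : Fin 1) :
    (scaledPascal n τ * Bmat n τ) k c = if (k : ℕ) = n - 1 then τ ^ n else 0 := by
  have hn : 0 < n := k.pos
  rw [mul_apply, Finset.sum_eq_single ⟨n - 1, by omega⟩]
  · have hk : (k : ℕ) ≤ n - 1 := by omega
    rcases hk.eq_or_lt with hk | hk
    · simp only [scaledPascal, Bmat, of_apply, hk, Nat.choose_self, if_true]
      rw [Nat.cast_one, mul_one, ← pow_succ, Nat.sub_add_cancel hn]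
    · simp [scaledPascal, Bmat, Nat.choose_eq_zero_of_lt hk, hk.ne]
  · intro l _ hl
    simp [Bmat, show (l : ℕ) ≠ n - 1 from fun e => hl (Fin.ext e)]
  · simp

lemma scaledPascal_mul_Hmat_Kdeadbeat (n : ℕ) {τ lam : ℝ} (hτ : τ ≠ 0) (hlam : lam ≠ 0) :
    scaledPascal n τ * Hmat n τ lam (Kdeadbeat n τ lam) =
      shiftMatrix ℝ n * scaledPascal n τ := by
  ext k j
  have hBK : (scaledPascal n τ * (lam • (Bmat n τ * Kdeadbeat n τ lam))) k j =
      if (k : ℕ) = n - 1 then τ ^ (j : ℕ) * n.choose j else 0 := by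
    rw [Matrix.mul_smul, ← Matrix.mul_assoc, Matrix.smul_apply, mul_apply, Fin.sum_univ_one,
      scaledPascal_mul_Bmat_apply]
    split_ifs
    · rw [Kdeadbeat, of_apply, ← pow_sub_mul_pow τ j.is_le', smul_eq_mul]
      field_simp
    · simp
  rw [Hmat, Matrix.mul_sub, Matrix.sub_apply, hBK, scaledPascal_mul_Amat_apply,
    shiftMatrix_mul_apply]
  split_ifs with hk hk' hk'
  · omega
  · rw [hk, Nat.sub_add_cancel k.pos, sub_self]
  · simp [scaledPascal]
  · omega

lemma charpoly_Hmat_Kdeadbeat (n : ℕ) {τ lam : ℝ} (hτ : τ ≠ 0) (hlam : lam ≠ 0) :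
    (Hmat n τ lam (Kdeadbeat n τ lam)).charpoly = X ^ n := by
  rw [charpoly_eq_of_mul_eq_mul (isUnit_det_scaledPascal hτ.isUnit)
    (scaledPascal_mul_Hmat_Kdeadbeat n hτ hlam), charpoly_shiftMatrix]

theorem stmt_11_general (n : ℕ) (τ : ℝ) (hτ : 0 < τ) (lam : ℝ) (hlam : lam ≠ 0) :
    (∀ z : ℂ,
      (z • (1 : Matrix (Fin n) (Fin n) ℂ)
          - (Hmat n τ lam (Kdeadbeat n τ lam)).map (Complex.ofReal ·)).det = z ^ n)
    ∧ (Hmat n τ lam (Kdeadbeat n τ lam)) ^ n = 0 := by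
  have hcharpoly := charpoly_Hmat_Kdeadbeat n hτ.ne' hlam
  refine ⟨fun z => ?_, ?_⟩
  · have h := eval_charpoly ((Hmat n τ lam (Kdeadbeat n τ lam)).map Complex.ofRealHom) z
    rw [charpoly_map, hcharpoly, Polynomial.map_pow, map_X, eval_pow, eval_X, scalar_apply,
      ← smul_one_eq_diagonal] at h
    exact h.symm
  · simpa [hcharpoly] using aeval_self_charpoly (Hmat n τ lam (Kdeadbeat n τ lam))

/-- for `λ ≠ 0` and `K(λ)_m = C(n,m−1)/(λ τ^{n−m+1})`, the characteristic
polynomial satisfies `det(zI − H(λ,K(λ))) = z^n` for all `z ∈ ℂ`, and consequently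
`H(λ,K(λ)) = A − λBK(λ)` is nilpotent: `(A − λBK(λ))^n = 0`. -/
theorem stmt_11 (n : ℕ) (hn : 1 ≤ n) (τ : ℝ) (hτ : 0 < τ) (lam : ℝ) (hlam : lam ≠ 0) :
    (∀ z : ℂ,
      (z • (1 : Matrix (Fin n) (Fin n) ℂ)
          - (Hmat n τ lam (Kdeadbeat n τ lam)).map (Complex.ofReal ·)).det = z ^ n)
    ∧ (Hmat n τ lam (Kdeadbeat n τ lam)) ^ n = 0 :=
  stmt_11_general n τ hτ lam hlam
end

section
/- Let n ≥ 1, τ > 0, and let A, B be as in the context, and let L be the symmetric Laplacian of a connected undirected graph on N nodes whose distinct nonzero eigenvalues are λ_{p_0} > λ_{p_1} > … > λ_{p_{l̄−1}} (l̄ distinct values). Define the time-varying gains K(k) ∈ ℝ^{1×n} by K_m(nl + j) = C(n, m−1)/(λ_{p_l} τ^{n−m+1}) for l = 0,…,l̄−1, j = 0,…,n−1, m = 1,…,n, and K(k) = 0 for k ≥ n l̄. Then the closed-loop system x(k+1) = (I_N ⊗ A − L ⊗ B K(k)) x(k) reaches consensus at step n l̄: for every initial state x(0) and every k ≥ n l̄,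 x(k) = (1/N)(𝟙_N 𝟙_N^T ⊗ A^k) x(0); in particular all agents' states are equal for k ≥ n l̄. -/
open Matrix Kronecker

/-!
Project the network state onto eigenvectors `v` of the symmetric Laplacian: the mode
`(vᵀ ⊗ Iₙ) x(k)` of eigenvalue `λ` follows the single-agent system `A - λ B K(k)`. For `v = 𝟙`
(`λ = 0`) this is `A`, so the sum of the agents' states follows `A ^ k`. For `λ = μ_l ≠ 0`, the
loop `A - λ B K(k)` during block `l` is the same matrix `A - B K₁` for every `l`; it is `I` plus a
companion matrix of `(s + 1) ^ n`, hence nilpotent of index `n`, so the mode is zero from the end of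
block `l` on. After `n l̄` steps every column of the state is orthogonal to all eigenvectors of
nonzero eigenvalue, hence lies in `ker L`, i.e. is constant, and the constant is the average.
-/

lemma smul_single_one_vecMul {R m n : Type*} [CommSemiring R] [Fintype m] [DecidableEq m]
    (c : R) (i : m) (M : Matrix m n R) :
    (c • Pi.single i 1) ᵥ* M = c • M i := by
  rw [smul_vecMul, single_one_vecMul]; rfl

/-- The gain `μ_l • K(k)` of block `l`; `m` is 0-based, so the entry `C(n, m) / τ^(n - m)` is the
paper's `C(n, m-1) / τ^(n-m+1)`. -/
noncomputable def deadbeatGain (n : ℕ) (τ : ℝ) : Matrix (Fin 1) (Fin n) ℝ :=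
  Matrix.of fun _ m => (n.choose m : ℝ) / τ ^ (n - m)

noncomputable def deadbeatLoop (n : ℕ) (τ : ℝ) : Matrix (Fin n) (Fin n) ℝ :=
  Amat n τ - Bmat n τ * deadbeatGain n τ

section Deadbeat

variable {n : ℕ} {τ : ℝ}

lemma deadbeatLoop_sub_one_apply (i j : Fin n) :
    (deadbeatLoop n τ - 1) i j =
      (if (j : ℕ) = i + 1 then τ else 0) -
        if (i : ℕ) = n - 1 then τ * ((n.choose j : ℝ) / τ ^ (n - j)) else 0 := by
  simp only [deadbeatLoop, Matrix.sub_apply, mul_apply, Fin.sum_univ_one, Amat, Bmat,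
    deadbeatGain, of_apply, one_apply, Fin.ext_iff]
  split_ifs <;> first | omega | ring

lemma deadbeatLoop_sub_one_row_of_lt {i : ℕ} (hi : i + 1 < n) :
    (deadbeatLoop n τ - 1) ⟨i, by omega⟩ = τ • Pi.single ⟨i + 1, hi⟩ 1 := by
  ext j
  rw [deadbeatLoop_sub_one_apply, if_neg (show i ≠ n - 1 by omega)]
  simp [Pi.single_apply, Fin.ext_iff]

lemma deadbeatLoop_sub_one_pow_row_zero (hn : 0 < n) {k : ℕ} (hk : k < n) :
    ((deadbeatLoop n τ - 1) ^ k) ⟨0, hn⟩ = τ ^ k • Pi.single ⟨k, hk⟩ 1 := by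
  induction k with
  | zero => ext j; simp [one_apply, Pi.single_apply, Fin.ext_iff, eq_comm]
  | succ k ih =>
    rw [pow_succ, mul_apply_eq_vecMul, ih (by omega), smul_single_one_vecMul,
      deadbeatLoop_sub_one_row_of_lt hk, smul_smul, pow_succ]

lemma deadbeatLoop_pow_row_zero (hτ : τ ≠ 0) (hn : 0 < n) :
    (deadbeatLoop n τ ^ n) ⟨0, hn⟩ = 0 := by
  set D := deadbeatLoop n τ - 1
  have hlast : (D ^ n) ⟨0, hn⟩ = τ ^ (n - 1) • D ⟨n - 1, by omega⟩ := by
    obtain ⟨m, rfl⟩ : ∃ m, n = m + 1 := ⟨n - 1, by omega⟩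
    rw [pow_succ, mul_apply_eq_vecMul, deadbeatLoop_sub_one_pow_row_zero hn (by omega),
      smul_single_one_vecMul]
    rfl
  have hD : deadbeatLoop n τ = D + 1 := by simp [D]
  rw [hD, (Commute.one_right D).add_pow, Finset.sum_range_succ]
  simp only [one_pow, mul_one, ← nsmul_eq_mul']
  ext j
  rw [Matrix.add_apply, Matrix.sum_apply]
  have hterm (m : Fin n) : (n.choose m • D ^ (m : ℕ)) ⟨0, hn⟩ j =
      if m = j then n.choose j * τ ^ (j : ℕ) else 0 := by
    rw [Matrix.smul_apply, deadbeatLoop_sub_one_pow_row_zero hn m.isLt]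
    by_cases h : m = j <;> simp [h]
  rw [Finset.sum_range (fun m => (n.choose m • D ^ m) ⟨0, hn⟩ j), Fintype.sum_congr _ _ hterm,
    Fintype.sum_ite_eq', Matrix.smul_apply, hlast]
  simp only [D, Pi.smul_apply, deadbeatLoop_sub_one_apply, Nat.choose_self, one_smul,
    if_pos, if_neg (show (j : ℕ) ≠ n - 1 + 1 by omega), smul_eq_mul, Pi.zero_apply]
  have hpow : τ ^ (n - 1) * τ = τ ^ (j : ℕ) * τ ^ (n - j) := by
    rw [← pow_succ, ← pow_add]; congr 1; omega
  field_simp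
  linear_combination -(n.choose j : ℝ) * hpow

/-- With `D = deadbeatLoop n τ - 1` and `P = deadbeatLoop n τ ^ n`, row `i` of `P` is `τ⁻ⁱ` times
row `0` of `D ^ i * P = P * D ^ i`. -/
lemma deadbeatLoop_pow_eq_zero (hτ : τ ≠ 0) : deadbeatLoop n τ ^ n = 0 := by
  rcases Nat.eq_zero_or_pos n with rfl | hn
  · exact Subsingleton.elim _ _
  ext i j
  have hcomm : Commute ((deadbeatLoop n τ - 1) ^ (i : ℕ)) (deadbeatLoop n τ ^ n) :=
    (((Commute.refl _).sub_left (Commute.one_left _)).pow_left _).pow_right n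
  have hrow := congrFun (congrArg (· ⟨0, hn⟩) hcomm.eq) j
  simp only [mul_apply_eq_vecMul, deadbeatLoop_sub_one_pow_row_zero hn i.isLt,
    deadbeatLoop_pow_row_zero hτ hn, smul_single_one_vecMul, zero_vecMul] at hrow
  exact (smul_eq_zero.mp hrow).resolve_left (pow_ne_zero _ hτ)

end Deadbeat

lemma eq_zero_of_deadbeat_block {n : ℕ} {τ μ : ℝ} (hτ : τ ≠ 0) {K : ℕ → Matrix (Fin 1) (Fin n) ℝ}
    {y : ℕ → Fin n → ℝ} (hy : ∀ k, y (k + 1) = (Amat n τ - μ • (Bmat n τ * K k)) *ᵥ y k) {a : ℕ}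
    (hblock : ∀ k, a ≤ k → k < a + n → μ • K k = deadbeatGain n τ) :
    ∀ k, a + n ≤ k → y k = 0 := by
  have hiter : ∀ p ≤ n, y (a + p) = deadbeatLoop n τ ^ p *ᵥ y a := by
    intro p hp
    induction p with
    | zero => simp
    | succ p ih =>
      rw [← add_assoc, hy, ← Matrix.mul_smul, hblock _ (by omega) (by omega), ih (by omega),
        mulVec_mulVec, pow_succ']
      rfl
  intro k hk
  induction k, hk using Nat.le_induction with
  | base => rw [hiter n le_rfl, deadbeatLoop_pow_eq_zero hτ, zero_mulVec]
  | succ k _ ih => rw [hy, ih, mulVec_zero]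

lemma smul_gain_eq_deadbeatGain {n lbar : ℕ} {τ : ℝ} {mu : Fin lbar → ℝ}
    {Kt : ℕ → Matrix (Fin 1) (Fin n) ℝ}
    (hKt : ∀ k, ∀ hk : k < n * lbar, ∀ m : Fin n,
      Kt k 0 m = (Nat.choose n (m : ℕ) : ℝ)
        / (mu ⟨k / n, Nat.div_lt_of_lt_mul hk⟩ * τ ^ (n - (m : ℕ))))
    {l : Fin lbar} (hl : mu l ≠ 0) {k : ℕ} (hk₁ : n * l ≤ k) (hk₂ : k < n * l + n) :
    mu l • Kt k = deadbeatGain n τ := by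
  have hk : k < n * lbar := by nlinarith [l.isLt]
  have hdiv : (⟨k / n, Nat.div_lt_of_lt_mul hk⟩ : Fin lbar) = l :=
    Fin.ext (Nat.div_eq_of_lt_le (by linarith) (by linarith))
  ext r m
  rw [Fin.fin_one_eq_zero r, Matrix.smul_apply, hKt k hk m, hdiv, smul_eq_mul, ← mul_div_assoc,
    mul_div_mul_left _ _ hl]
  rfl

section LeftContract

variable {R ι ι' κ κ' : Type*} [CommRing R] [Fintype ι] [Fintype ι'] [Fintype κ']

/-- The paper's `(vᵀ ⊗ Iₙ) z`. -/
def leftContract (v : ι → R) (z : ι × κ → R) : κ → R := fun j => v ⬝ᵥ fun i => z (i, j)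

lemma leftContract_sub (v : ι → R) (z₁ z₂ : ι × κ → R) :
    leftContract v (z₁ - z₂) = leftContract v z₁ - leftContract v z₂ := by
  ext j; exact dotProduct_sub _ _ _

lemma leftContract_smul (c : R) (v : ι → R) (z : ι × κ → R) :
    leftContract (c • v) z = c • leftContract v z := by
  ext j; exact smul_dotProduct _ _ _

lemma leftContract_kronecker_mulVec (v : ι → R) (P : Matrix ι ι' R) (Q : Matrix κ κ' R)
    (z : ι' × κ' → R) :
    leftContract v ((P ⊗ₖ Q) *ᵥ z) = Q *ᵥ leftContract (v ᵥ* P) z := by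
  ext j
  simp only [leftContract, mulVec, vecMul, dotProduct, kroneckerMap_apply, Fintype.sum_prod_type,
    Finset.mul_sum, Finset.sum_mul]
  rw [Finset.sum_comm, Finset.sum_comm (s := Finset.univ (α := κ'))]
  refine Finset.sum_congr rfl fun i' _ => ?_
  rw [Finset.sum_comm]
  exact Finset.sum_congr rfl fun j' _ => Finset.sum_congr rfl fun i _ => by ring

lemma leftContract_closedLoop [DecidableEq ι] {v : ι → R} {L : Matrix ι ι R} {μ : R}
    (hv : v ᵥ* L = μ • v) (A G : Matrix κ κ' R) (z : ι × κ' → R) :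
    leftContract v (((1 : Matrix ι ι R) ⊗ₖ A - L ⊗ₖ G) *ᵥ z) =
      (A - μ • G) *ᵥ leftContract v z := by
  rw [sub_mulVec, leftContract_sub, leftContract_kronecker_mulVec, leftContract_kronecker_mulVec,
    vecMul_one, hv, leftContract_smul, sub_mulVec, smul_mulVec, mulVec_smul]

lemma leftContract_ones_kronecker_mulVec [DecidableEq ι] (P : Matrix κ κ' R) (z : ι × κ' → R)
    (i : ι) (j : κ) :
    ((of fun _ _ => (1 : R) : Matrix ι ι R) ⊗ₖ P *ᵥ z) (i, j) = (P *ᵥ leftContract 1 z) j := by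
  have := congrFun (leftContract_kronecker_mulVec (Pi.single i 1) (of fun _ _ => (1 : R)) P z) j
  simp only [leftContract, single_one_dotProduct] at this
  rw [this]
  congr 2
  ext i'
  simp [vecMul, dotProduct]

end LeftContract

lemma mulVec_eq_zero_of_orthogonal_eigenvectors {ι : Type*} [Fintype ι] [DecidableEq ι]
    {L : Matrix ι ι ℝ} (hL : L.IsHermitian) {u : ι → ℝ}
    (h : ∀ (v : ι → ℝ) (μ : ℝ), μ ∈ spectrum ℝ L → μ ≠ 0 → L *ᵥ v = μ • v → v ⬝ᵥ u = 0) :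
    L *ᵥ u = 0 := by
  have hcoord :
      diagonal hL.eigenvalues *ᵥ (star (hL.eigenvectorUnitary : Matrix ι ι ℝ) *ᵥ u) = 0 := by
    ext j
    rw [mulVec_diagonal, Pi.zero_apply, mul_eq_zero, or_iff_not_imp_left]
    intro hj
    rw [← h _ _ (hL.eigenvalues_mem_spectrum_real j) hj (hL.mulVec_eigenvectorBasis j)]
    simp [mulVec, dotProduct, star_apply]
  conv_lhs => rw [hL.spectral_theorem]
  simp [Unitary.conjStarAlgAut_apply, ← mulVec_mulVec, hcoord]

theorem stmt_12_general (n : ℕ) (τ : ℝ) (hτ : 0 < τ)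
    (N : ℕ) (L : Matrix (Fin N) (Fin N) ℝ)
    (hsym : L.IsSymm)
    (hL1 : L *ᵥ (fun _ => (1 : ℝ)) = 0)
    (hker : ∀ v : Fin N → ℝ, L *ᵥ v = 0 → ∃ c : ℝ, v = fun _ => c)
    (lbar : ℕ) (mu : Fin lbar → ℝ)
    (hspec : spectrum ℝ L = insert 0 (Set.range mu))
    (Kt : ℕ → Matrix (Fin 1) (Fin n) ℝ)
    (hKt : ∀ k, ∀ hk : k < n * lbar, ∀ m : Fin n,
      Kt k 0 m = (Nat.choose n (m : ℕ) : ℝ)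
        / (mu ⟨k / n, Nat.div_lt_of_lt_mul hk⟩ * τ ^ (n - (m : ℕ))))
    (x : ℕ → Fin N × Fin n → ℝ)
    (hx : ∀ k, x (k + 1) =
      ((1 : Matrix (Fin N) (Fin N) ℝ) ⊗ₖ Amat n τ - L ⊗ₖ (Bmat n τ * Kt k)) *ᵥ x k) :
    ∀ k, n * lbar ≤ k →
      x k = ((N : ℝ)⁻¹ • ((Matrix.of fun _ _ => (1 : ℝ)) ⊗ₖ (Amat n τ ^ k))) *ᵥ x 0 := by
  have hstep {v : Fin N → ℝ} {μ : ℝ} (hv : L *ᵥ v = μ • v) (k : ℕ) :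
      leftContract v (x (k + 1)) =
        (Amat n τ - μ • (Bmat n τ * Kt k)) *ᵥ leftContract v (x k) := by
    rw [hx, leftContract_closedLoop (by rwa [← mulVec_transpose, hsym.eq])]
  have hsum (k : ℕ) : leftContract 1 (x k) = Amat n τ ^ k *ᵥ leftContract 1 (x 0) := by
    induction k with
    | zero => simp
    | succ k ih =>
      rw [hstep (μ := 0) (by rw [zero_smul]; exact hL1), zero_smul, sub_zero, ih, mulVec_mulVec,
        pow_succ']
  have hmode (v : Fin N → ℝ) (μ : ℝ) (hμ : μ ∈ spectrum ℝ L) (hμ0 : μ ≠ 0)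
      (hv : L *ᵥ v = μ • v) (k : ℕ) (hk : n * lbar ≤ k) : leftContract v (x k) = 0 := by
    obtain ⟨l, rfl⟩ : μ ∈ Set.range mu := by
      rw [hspec] at hμ
      exact hμ.resolve_left hμ0
    refine eq_zero_of_deadbeat_block (y := fun k => leftContract v (x k)) (a := n * l) hτ.ne'
      (hstep hv) (fun k hk₁ hk₂ => smul_gain_eq_deadbeatGain hKt hμ0 hk₁ hk₂) k ?_
    nlinarith [l.isLt]
  intro k hk
  ext ⟨i, j⟩
  obtain ⟨c, hc⟩ := hker _ <| mulVec_eq_zero_of_orthogonal_eigenvectors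
    (isHermitian_iff_isSymm.mpr hsym) fun v μ hμ hμ0 hv => congrFun (hmode v μ hμ hμ0 hv k hk) j
  have hN : (N : ℝ) ≠ 0 := Nat.cast_ne_zero.mpr (Fin.pos i).ne'
  have hmean : leftContract 1 (x k) j = N * c := by
    simp [leftContract, one_dotProduct, hc]
  rw [smul_mulVec, Pi.smul_apply, leftContract_ones_kronecker_mulVec, ← hsum, hmean,
    congrFun hc i, smul_eq_mul, inv_mul_cancel_left₀ hN]

/-- finite-time consensus.  `L` is the symmetric Laplacian of a connected
graph (`L𝟙 = 0`, kernel spanned by `𝟙`, i.e. `0` is a simple eigenvalue) whose distinct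
nonzero eigenvalues are `μ_0 > μ_1 > … > μ_{l̄−1} > 0`.  With the time-varying gains
`K_m(nl + j) = C(n, m−1)/(μ_l τ^{n−m+1})` for `l < l̄`, `j < n` (i.e. `l = k / n`), and
`K(k) = 0` for `k ≥ n l̄`, the closed-loop system `x(k+1) = (I_N ⊗ A − L ⊗ B K(k)) x(k)`
reaches consensus at step `n l̄`: `x(k) = (1/N)(𝟙𝟙ᵀ ⊗ A^k) x(0)` for all `k ≥ n l̄`. -/
theorem stmt_12 (n : ℕ) (hn : 1 ≤ n) (τ : ℝ) (hτ : 0 < τ)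
    (N : ℕ) (hN : 1 ≤ N) (L : Matrix (Fin N) (Fin N) ℝ)
    (hsym : L.IsSymm)
    (hL1 : L *ᵥ (fun _ => (1 : ℝ)) = 0)
    (hker : ∀ v : Fin N → ℝ, L *ᵥ v = 0 → ∃ c : ℝ, v = fun _ => c)
    (lbar : ℕ) (mu : Fin lbar → ℝ)
    (hmu : StrictAnti mu) (hmupos : ∀ l, 0 < mu l)
    (hspec : spectrum ℝ L = insert 0 (Set.range mu))
    (Kt : ℕ → Matrix (Fin 1) (Fin n) ℝ)
    (hKt : ∀ k, ∀ hk : k < n * lbar, ∀ m : Fin n,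
      Kt k 0 m = (Nat.choose n (m : ℕ) : ℝ)
        / (mu ⟨k / n, Nat.div_lt_of_lt_mul hk⟩ * τ ^ (n - (m : ℕ))))
    (hKt0 : ∀ k, n * lbar ≤ k → Kt k = 0)
    (x : ℕ → Fin N × Fin n → ℝ)
    (hx : ∀ k, x (k + 1) =
      ((1 : Matrix (Fin N) (Fin N) ℝ) ⊗ₖ Amat n τ - L ⊗ₖ (Bmat n τ * Kt k)) *ᵥ x k) :
    ∀ k, n * lbar ≤ k →
      x k = ((N : ℝ)⁻¹ • ((Matrix.of fun _ _ => (1 : ℝ)) ⊗ₖ (Amat n τ ^ k))) *ᵥ x 0 :=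
  stmt_12_general n τ hτ N L hsym hL1 hker lbar mu hspec Kt hKt x hx
end

section
/- Let n ≥ 1, τ > 0, and let A be as in the context. Suppose the real nN-dimensional sequence x(k) satisfies x(k) = (1/N)(𝟙_N 𝟙_N^T ⊗ A^k) x(0) for some k. Then for every agent i, the j-th component of x_i(k) equals s_j(k) = (1/N) Σ_{m=1}^{n−j+1} τ^{m−1} C(k, m−1) Σ_{p=1}^{N} x_p^{(m+j−1)}(0) for j = 1,…,n, where x_p^{(q)}(0) denotes the q-th component of agent p's initial state. -/
open Matrix Kronecker

lemma Amat_pow (n : ℕ) (τ : ℝ) (k : ℕ) (i j : Fin n) :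
    (Amat n τ ^ k) i j =
      if (i : ℕ) ≤ (j : ℕ) then τ ^ ((j : ℕ) - i) * (k.choose ((j : ℕ) - i) : ℝ) else 0 := by
  induction k generalizing i j with
  | zero =>
    simp only [pow_zero, Matrix.one_apply]
    rcases eq_or_ne i j with h | h
    · subst h; simp
    · rw [if_neg h]
      rcases le_or_gt (i : ℕ) (j : ℕ) with hle | hlt
      · have : (j : ℕ) - i ≠ 0 := by
          have := Fin.val_ne_of_ne h; omega
        rw [if_pos hle, Nat.choose_eq_zero_of_lt (by omega)]
        simp
      · rw [if_neg (by omega)]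
  | succ k ih =>
    rw [pow_succ', Matrix.mul_apply]
    have hsplit : ∀ q : Fin n, Amat n τ i q * (Amat n τ ^ k) q j =
        (if q = i then (Amat n τ ^ k) i j else 0) +
        (if (q : ℕ) = (i : ℕ) + 1 then τ * (Amat n τ ^ k) q j else 0) := by
      intro q
      simp only [Amat, Matrix.of_apply]
      rcases eq_or_ne q i with h | h
      · subst h
        rw [if_pos rfl, if_pos rfl, if_neg (by omega)]
        ring
      · rw [if_neg (fun hq => h (Fin.ext hq)), if_neg h]
        rcases eq_or_ne ((q : ℕ)) ((i : ℕ) + 1) with h2 | h2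
        · rw [if_pos h2, if_pos h2]; ring
        · rw [if_neg h2, if_neg h2]; ring
    rw [Finset.sum_congr rfl (fun q _ => hsplit q), Finset.sum_add_distrib,
      Finset.sum_ite_eq' Finset.univ i]
    simp only [Finset.mem_univ, if_true]
    rcases lt_or_ge ((i : ℕ) + 1) n with hlt | hge
    · have h2 : ∑ q : Fin n, (if (q : ℕ) = (i : ℕ) + 1 then τ * (Amat n τ ^ k) q j else 0)
          = τ * (Amat n τ ^ k) ⟨(i : ℕ) + 1, hlt⟩ j := by
        rw [Finset.sum_eq_single (⟨(i : ℕ) + 1, hlt⟩ : Fin n)]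
        · simp
        · intro q _ hq
          rw [if_neg (fun hc => hq (Fin.ext hc))]
        · simp
      rw [h2, ih, ih]
      simp only [Fin.val_mk]
      by_cases hle : (i : ℕ) ≤ (j : ℕ)
      · rw [if_pos hle, if_pos hle]
        by_cases hle2 : (i : ℕ) + 1 ≤ (j : ℕ)
        · rw [if_pos hle2]
          have hd : (j : ℕ) - (i : ℕ) = ((j : ℕ) - ((i : ℕ) + 1)) + 1 := by omega
          rw [hd, Nat.choose_succ_succ, pow_succ]
          push_cast
          ring
        · rw [if_neg hle2]
          have hij : (j : ℕ) - (i : ℕ) = 0 := by omega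
          rw [hij]
          simp
      · rw [if_neg hle, if_neg hle, if_neg (by omega)]
        ring
    · have h2 : ∑ q : Fin n, (if (q : ℕ) = (i : ℕ) + 1 then τ * (Amat n τ ^ k) q j else 0)
          = 0 := by
        apply Finset.sum_eq_zero
        intro q _
        rw [if_neg (by have := q.isLt; omega)]
      rw [h2, ih, add_zero]
      by_cases hle : (i : ℕ) ≤ (j : ℕ)
      · rw [if_pos hle, if_pos hle]
        have hij : (j : ℕ) - (i : ℕ) = 0 := by have := j.isLt; omega
        rw [hij]
        simp
      · rw [if_neg hle, if_neg hle]

/-- if `x(k) = (1/N)(𝟙𝟙ᵀ ⊗ A^k) x(0)`, then for every agent `i` the `j`-th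
component of `x_i(k)` equals
`s_j(k) = (1/N) ∑_{m=1}^{n−j+1} τ^{m−1} C(k, m−1) ∑_{p=1}^N x_p^{(m+j−1)}(0)`.
(The inner index `m` is reindexed by `m' = m−1 ∈ range (n−j)` for the 0-based component
`j : Fin n`, and `x_p^{(m+j−1)}(0)` is the 0-based component `m' + j` of agent `p`.) -/
theorem stmt_13 (n : ℕ) (hn : 1 ≤ n) (τ : ℝ) (hτ : 0 < τ)
    (N : ℕ) (hN : 1 ≤ N) (k : ℕ) (x0 xk : Fin N × Fin n → ℝ)
    (hxk : xk = ((N : ℝ)⁻¹ • ((Matrix.of fun _ _ => (1 : ℝ)) ⊗ₖ (Amat n τ ^ k))) *ᵥ x0) :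
    ∀ i : Fin N, ∀ j : Fin n,
      xk (i, j) = (N : ℝ)⁻¹ *
        ∑ m ∈ (Finset.range (n - (j : ℕ))).attach,
          τ ^ (m : ℕ) * (Nat.choose k (m : ℕ) : ℝ) *
            ∑ p : Fin N,
              x0 (p, ⟨(m : ℕ) + (j : ℕ), by
                have hm := Finset.mem_range.mp m.2
                have hj := j.isLt
                omega⟩) := by
  intro i j
  subst hxk
  rw [Matrix.smul_mulVec]
  simp only [Pi.smul_apply, smul_eq_mul, Matrix.mulVec, dotProduct,
    Matrix.kroneckerMap_apply, Matrix.of_apply, one_mul, Fintype.sum_prod_type]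
  congr 1
  -- swap sums on RHS
  have hswap : ∑ m ∈ (Finset.range (n - (j : ℕ))).attach,
      τ ^ (m : ℕ) * (Nat.choose k (m : ℕ) : ℝ) *
        ∑ p : Fin N, x0 (p, ⟨(m : ℕ) + (j : ℕ), by
            have hm := Finset.mem_range.mp m.2; have hj := j.isLt; omega⟩)
      = ∑ p : Fin N, ∑ m ∈ (Finset.range (n - (j : ℕ))).attach,
          τ ^ (m : ℕ) * (Nat.choose k (m : ℕ) : ℝ) *
            x0 (p, ⟨(m : ℕ) + (j : ℕ), by
              have hm := Finset.mem_range.mp m.2; have hj := j.isLt; omega⟩) := by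
    rw [Finset.sum_comm]
    exact Finset.sum_congr rfl fun m _ => Finset.mul_sum _ _ _
  rw [hswap]
  refine Finset.sum_congr rfl fun p _ => ?_
  -- pointwise in p
  have hLHS : ∀ q : Fin n, (Amat n τ ^ k) j q * x0 (p, q) =
      if (j : ℕ) ≤ (q : ℕ) then
        τ ^ ((q : ℕ) - j) * (k.choose ((q : ℕ) - j) : ℝ) * x0 (p, q) else 0 := by
    intro q
    rw [Amat_pow]
    split_ifs with h
    · rfl
    · exact zero_mul _
  rw [Finset.sum_congr rfl fun q _ => hLHS q, ← Finset.sum_filter]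
  refine Finset.sum_nbij'
    (i := fun q => (⟨(q : ℕ) - (j : ℕ),
      Finset.mem_range.mpr (by have := q.isLt; have := j.isLt; omega)⟩ :
      {m // m ∈ Finset.range (n - (j : ℕ))}))
    (j := fun m => (⟨(m : ℕ) + (j : ℕ),
      by have := Finset.mem_range.mp m.2; have := j.isLt; omega⟩ : Fin n))
    (fun a _ => Finset.mem_attach _ _)
    (fun a _ => by
      simp only [Finset.mem_filter, Finset.mem_univ, true_and]
      exact Nat.le_add_left _ _)
    (fun a ha => by
      have hja : (j : ℕ) ≤ (a : ℕ) := by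
        simpa using (Finset.mem_filter.mp ha).2
      exact Fin.ext (by simp; omega))
    (fun a _ => Subtype.ext (by simp))
    (fun a ha => by
      have hja : (j : ℕ) ≤ (a : ℕ) := by
        simpa using (Finset.mem_filter.mp ha).2
      have hfin : (⟨(a : ℕ) - (j : ℕ) + (j : ℕ), by have := a.isLt; have := j.isLt; omega⟩ : Fin n) = a :=
        Fin.ext (by simp; omega)
      simp only [hfin])
end

section
/- Let n ≥ 1 be an odd integer and r a real number. For p = 1,…,n+1 and q = 1,…,n, let w̃_{pq} denote the coefficient of s^{n+1−p} in the real polynomial (s+1)^{n−q}(s−1)^q, and define h_p(r) = (r^n + (−1)^{n+p−1}) C(n, n−p+1) + Σ_{q=1}^{n−1} r^{n−q} w̃_{pq} (−1)^q C(n, n−q). Then h_1(r) + h_3(r) + … + h_n(r) = 2^{n−1}(r^n − 1) and h_2(r) + h_4(r) + … + h_{n+1}(r) = 2^{n−1}(r^n + 1). -/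
open Polynomial

/-- `w̃_{pq}`: the coefficient of `s^{n+1−p}` in the real polynomial `(s+1)^{n−q}(s−1)^q`. -/
noncomputable def wtilde (n p q : ℕ) : ℝ :=
  (((X + 1) ^ (n - q) * (X - 1) ^ q : Polynomial ℝ)).coeff (n + 1 - p)

/-- `h_p(r) = (r^n + (−1)^{n+p−1}) C(n, n−p+1) + ∑_{q=1}^{n−1} r^{n−q} w̃_{pq} (−1)^q C(n, n−q)`
(with `n − p + 1` read as the integer `n + 1 − p`, which is `0` for `p = n + 1`). -/
noncomputable def hcoef (n : ℕ) (r : ℝ) (p : ℕ) : ℝ :=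
  (r ^ n + (-1 : ℝ) ^ (n + p - 1)) * (Nat.choose n (n + 1 - p) : ℝ) +
    ∑ q ∈ Finset.Icc 1 (n - 1), r ^ (n - q) * wtilde n p q * (-1 : ℝ) ^ q * (Nat.choose n (n - q) : ℝ)

section Aux
open Finset
lemma sum_filter_odd' (N : ℕ) (f : ℕ → ℝ) :
    ∑ k ∈ (range N).filter (fun k => Odd k), f k
      = (∑ k ∈ range N, f k - ∑ k ∈ range N, (-1:ℝ)^k * f k) / 2 := by
  rw [Finset.sum_filter, ← Finset.sum_sub_distrib, Finset.sum_div]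
  refine Finset.sum_congr rfl fun k _ => ?_
  rcases Nat.even_or_odd k with hk | hk
  · simp [Nat.odd_iff, Nat.even_iff.mp hk, hk.neg_one_pow]
  · simp only [hk, if_true, hk.neg_one_pow]; ring

lemma sum_filter_even' (N : ℕ) (f : ℕ → ℝ) :
    ∑ k ∈ (range N).filter (fun k => Even k), f k
      = (∑ k ∈ range N, f k + ∑ k ∈ range N, (-1:ℝ)^k * f k) / 2 := by
  rw [Finset.sum_filter, ← Finset.sum_add_distrib, Finset.sum_div]
  refine Finset.sum_congr rfl fun k _ => ?_
  rcases Nat.even_or_odd k with hk | hk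
  · simp only [hk, if_true, hk.neg_one_pow]; ring
  · simp [Nat.even_iff, Nat.odd_iff.mp hk, hk.neg_one_pow]

lemma reindex_odd (n : ℕ) (hodd : Odd n) (f : ℕ → ℝ) :
    ∑ p ∈ (Finset.Icc 1 (n+1)).filter (fun p => Odd p), f (n+1-p)
      = ∑ k ∈ (range (n+1)).filter (fun k => Odd k), f k := by
  rw [Nat.odd_iff] at hodd
  apply Finset.sum_nbij' (i := fun p => n+1-p) (j := fun k => n+1-k) <;>
    simp only [Finset.mem_filter, Finset.mem_Icc, Finset.mem_range, Nat.odd_iff] <;>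
    intros a ha <;> first | omega | trivial

lemma reindex_even (n : ℕ) (hodd : Odd n) (f : ℕ → ℝ) :
    ∑ p ∈ (Finset.Icc 1 (n+1)).filter (fun p => Even p), f (n+1-p)
      = ∑ k ∈ (range (n+1)).filter (fun k => Even k), f k := by
  rw [Nat.odd_iff] at hodd
  apply Finset.sum_nbij' (i := fun p => n+1-p) (j := fun k => n+1-k) <;>
    simp only [Finset.mem_filter, Finset.mem_Icc, Finset.mem_range, Nat.odd_iff,
      Nat.even_iff] <;> intros a ha <;> first | omega | trivial

lemma Pdeg (n q : ℕ) (hq : q ≤ n) :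
    (((X + 1) ^ (n - q) * (X - 1) ^ q : Polynomial ℝ)).natDegree < n + 1 := by
  refine lt_of_le_of_lt (le_trans (natDegree_mul_le) ?_) (Nat.lt_succ_self n)
  have h1 : ((X + 1 : Polynomial ℝ) ^ (n - q)).natDegree ≤ n - q := by
    refine le_trans (natDegree_pow _ _).le ?_
    have : (X + 1 : Polynomial ℝ).natDegree = 1 := by
      simpa using natDegree_X_add_C (1 : ℝ)
    simp [this]
  have h2 : ((X - 1 : Polynomial ℝ) ^ q).natDegree ≤ q := by
    refine le_trans (natDegree_pow _ _).le ?_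
    have : (X - 1 : Polynomial ℝ).natDegree = 1 := by
      simpa using natDegree_X_sub_C (1 : ℝ)
    simp [this]
  omega

lemma eval1 (n q : ℕ) (hq : 1 ≤ q) :
    (((X + 1) ^ (n - q) * (X - 1) ^ q : Polynomial ℝ)).eval 1 = 0 := by
  simp [zero_pow (by omega : q ≠ 0)]

lemma evalneg1 (n q : ℕ) (hq : q ≤ n - 1) (hn : 1 ≤ n) :
    (((X + 1) ^ (n - q) * (X - 1) ^ q : Polynomial ℝ)).eval (-1) = 0 := by
  simp [zero_pow (by omega : n - q ≠ 0)]

lemma coeff_sum_eval (P : Polynomial ℝ) (n : ℕ) (h : P.natDegree < n + 1) :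
    (∑ k ∈ range (n+1), P.coeff k = P.eval 1) ∧
    (∑ k ∈ range (n+1), (-1:ℝ)^k * P.coeff k = P.eval (-1)) := by
  constructor
  · rw [Polynomial.eval_eq_sum_range' h]; simp
  · rw [Polynomial.eval_eq_sum_range' h]
    exact Finset.sum_congr rfl fun k _ => mul_comm _ _

lemma wsum_odd (n q : ℕ) (hq1 : 1 ≤ q) (hq2 : q ≤ n - 1) (hn : 1 ≤ n) (hodd : Odd n) :
    ∑ p ∈ (Finset.Icc 1 (n+1)).filter (fun p => Odd p), wtilde n p q = 0 := by
  set P : Polynomial ℝ := (X + 1) ^ (n - q) * (X - 1) ^ q with hP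
  have hd := Pdeg n q (by omega)
  obtain ⟨h1, h2⟩ := coeff_sum_eval P n hd
  have : ∑ p ∈ (Finset.Icc 1 (n+1)).filter (fun p => Odd p), wtilde n p q
      = ∑ k ∈ (range (n+1)).filter (fun k => Odd k), P.coeff k :=
    reindex_odd n hodd (fun k => P.coeff k)
  rw [this, sum_filter_odd', h1, h2, eval1 n q hq1, evalneg1 n q hq2 hn]
  norm_num

lemma wsum_even (n q : ℕ) (hq1 : 1 ≤ q) (hq2 : q ≤ n - 1) (hn : 1 ≤ n) (hodd : Odd n) :
    ∑ p ∈ (Finset.Icc 1 (n+1)).filter (fun p => Even p), wtilde n p q = 0 := by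
  set P : Polynomial ℝ := (X + 1) ^ (n - q) * (X - 1) ^ q with hP
  have hd := Pdeg n q (by omega)
  obtain ⟨h1, h2⟩ := coeff_sum_eval P n hd
  have : ∑ p ∈ (Finset.Icc 1 (n+1)).filter (fun p => Even p), wtilde n p q
      = ∑ k ∈ (range (n+1)).filter (fun k => Even k), P.coeff k :=
    reindex_even n hodd (fun k => P.coeff k)
  rw [this, sum_filter_even', h1, h2, eval1 n q hq1, evalneg1 n q hq2 hn]
  norm_num

lemma choose_total (n : ℕ) : ∑ k ∈ range (n+1), ((n.choose k : ℕ) : ℝ) = 2 ^ n := by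
  have := congrArg (Nat.cast : ℕ → ℝ) (Nat.sum_range_choose n)
  push_cast at this
  exact this

lemma choose_alt (n : ℕ) (hn : 1 ≤ n) :
    ∑ k ∈ range (n+1), (-1:ℝ)^k * (n.choose k : ℝ) = 0 := by
  have h := add_pow (-1 : ℝ) 1 n
  simp only [one_pow, mul_one, neg_add_cancel] at h
  rw [← h, zero_pow (by omega : n ≠ 0)]

lemma choose_sum_odd (n : ℕ) (hn : 1 ≤ n) (hodd : Odd n) :
    ∑ p ∈ (Finset.Icc 1 (n+1)).filter (fun p => Odd p), ((n.choose (n+1-p) : ℕ) : ℝ)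
      = 2 ^ (n - 1) := by
  rw [reindex_odd n hodd (fun k => ((n.choose k : ℕ) : ℝ)), sum_filter_odd',
    choose_total, choose_alt n hn]
  have : (2:ℝ)^n = 2^(n-1) * 2 := by rw [← pow_succ]; congr 1; omega
  rw [this]; ring

lemma choose_sum_even (n : ℕ) (hn : 1 ≤ n) (hodd : Odd n) :
    ∑ p ∈ (Finset.Icc 1 (n+1)).filter (fun p => Even p), ((n.choose (n+1-p) : ℕ) : ℝ)
      = 2 ^ (n - 1) := by
  rw [reindex_even n hodd (fun k => ((n.choose k : ℕ) : ℝ)), sum_filter_even',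
    choose_total, choose_alt n hn]
  have : (2:ℝ)^n = 2^(n-1) * 2 := by rw [← pow_succ]; congr 1; omega
  rw [this]; ring
end Aux

/-- for odd `n ≥ 1` and any real `r`,
`h_1(r) + h_3(r) + … + h_n(r) = 2^{n−1}(r^n − 1)` and
`h_2(r) + h_4(r) + … + h_{n+1}(r) = 2^{n−1}(r^n + 1)`. -/
theorem stmt_14 (n : ℕ) (hn : 1 ≤ n) (hodd : Odd n) (r : ℝ) :
    (∑ p ∈ (Finset.Icc 1 (n + 1)).filter (fun p => Odd p), hcoef n r p
        = 2 ^ (n - 1) * (r ^ n - 1))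
    ∧ (∑ p ∈ (Finset.Icc 1 (n + 1)).filter (fun p => Even p), hcoef n r p
        = 2 ^ (n - 1) * (r ^ n + 1)) := by
  have hn2 := Nat.odd_iff.mp hodd
  constructor
  · unfold hcoef
    rw [Finset.sum_add_distrib]
    have e1 : ∑ p ∈ (Finset.Icc 1 (n + 1)).filter (fun p => Odd p),
        (r ^ n + (-1 : ℝ) ^ (n + p - 1)) * (Nat.choose n (n + 1 - p) : ℝ)
        = (r ^ n - 1) * ∑ p ∈ (Finset.Icc 1 (n + 1)).filter (fun p => Odd p),
            ((n.choose (n+1-p) : ℕ) : ℝ) := by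
      rw [Finset.mul_sum]
      refine Finset.sum_congr rfl fun p hp => ?_
      simp only [Finset.mem_filter, Finset.mem_Icc, Nat.odd_iff] at hp
      have ho : Odd (n + p - 1) := Nat.odd_iff.mpr (by omega)
      rw [ho.neg_one_pow]; ring
    have e2 : ∑ p ∈ (Finset.Icc 1 (n + 1)).filter (fun p => Odd p),
        ∑ q ∈ Finset.Icc 1 (n - 1),
          r ^ (n - q) * wtilde n p q * (-1 : ℝ) ^ q * (Nat.choose n (n - q) : ℝ) = 0 := by
      rw [Finset.sum_comm]
      refine Finset.sum_eq_zero fun q hq => ?_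
      simp only [Finset.mem_Icc] at hq
      calc ∑ p ∈ (Finset.Icc 1 (n + 1)).filter (fun p => Odd p),
            r ^ (n - q) * wtilde n p q * (-1 : ℝ) ^ q * (Nat.choose n (n - q) : ℝ)
          = (r ^ (n - q) * (-1 : ℝ) ^ q * (Nat.choose n (n - q) : ℝ)) *
              ∑ p ∈ (Finset.Icc 1 (n + 1)).filter (fun p => Odd p), wtilde n p q := by
            rw [Finset.mul_sum]; exact Finset.sum_congr rfl fun p _ => by ring
        _ = 0 := by rw [wsum_odd n q hq.1 hq.2 hn hodd]; ring
    rw [e1, e2, choose_sum_odd n hn hodd]; ring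
  · unfold hcoef
    rw [Finset.sum_add_distrib]
    have e1 : ∑ p ∈ (Finset.Icc 1 (n + 1)).filter (fun p => Even p),
        (r ^ n + (-1 : ℝ) ^ (n + p - 1)) * (Nat.choose n (n + 1 - p) : ℝ)
        = (r ^ n + 1) * ∑ p ∈ (Finset.Icc 1 (n + 1)).filter (fun p => Even p),
            ((n.choose (n+1-p) : ℕ) : ℝ) := by
      rw [Finset.mul_sum]
      refine Finset.sum_congr rfl fun p hp => ?_
      simp only [Finset.mem_filter, Finset.mem_Icc, Nat.even_iff] at hp
      have he : Even (n + p - 1) := Nat.even_iff.mpr (by omega)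
      rw [he.neg_one_pow]
    have e2 : ∑ p ∈ (Finset.Icc 1 (n + 1)).filter (fun p => Even p),
        ∑ q ∈ Finset.Icc 1 (n - 1),
          r ^ (n - q) * wtilde n p q * (-1 : ℝ) ^ q * (Nat.choose n (n - q) : ℝ) = 0 := by
      rw [Finset.sum_comm]
      refine Finset.sum_eq_zero fun q hq => ?_
      simp only [Finset.mem_Icc] at hq
      calc ∑ p ∈ (Finset.Icc 1 (n + 1)).filter (fun p => Even p),
            r ^ (n - q) * wtilde n p q * (-1 : ℝ) ^ q * (Nat.choose n (n - q) : ℝ)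
          = (r ^ (n - q) * (-1 : ℝ) ^ q * (Nat.choose n (n - q) : ℝ)) *
              ∑ p ∈ (Finset.Icc 1 (n + 1)).filter (fun p => Even p), wtilde n p q := by
            rw [Finset.mul_sum]; exact Finset.sum_congr rfl fun p _ => by ring
        _ = 0 := by rw [wsum_even n q hq.1 hq.2 hn hodd]; ring
    rw [e1, e2, choose_sum_even n hn hodd]; ring
end
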